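/- arXiv:1909.10240 — 7 statements merged into one kernel-verified Lean document; each statement's English description precedes it below -/
import Mathlib

section
/- If D is an oriented graph (a digraph with no pair of opposite arcs), then every proper edge-colouring of the underlying undirected graph of D induces a neighbour-distinguishing proper arc-colouring of D; consequently ndi(D) ≤ χ'(und(D)) ≤ Δ(und(D)) + 1 ≤ 2Δ*(D) + 2. -/
open Finset

section Defs

variable {V : Type*}

/-- A (proper) arc-colouring: arcs sharing a tail, or sharing a head, get distinct colours. -/
def ProperArc (A : V → V → Prop) (γ : V → V → ℕ) : Prop :=
  (∀ u v w, A u v → A u w → v ≠ w → γ u v ≠ γ u w) ∧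
  (∀ u v w, A u v → A w v → u ≠ w → γ u v ≠ γ w v)

/-- Colours appearing on outgoing arcs of `u`. -/
def outColors (A : V → V → Prop) (γ : V → V → ℕ) (u : V) : Set ℕ :=
  {c | ∃ v, A u v ∧ γ u v = c}

/-- Colours appearing on incoming arcs of `u`. -/
def inColors (A : V → V → Prop) (γ : V → V → ℕ) (u : V) : Set ℕ :=
  {c | ∃ v, A v u ∧ γ v u = c}

/-- `u` and `v` are distinguished by `γ`. -/
def Distinguished (A : V → V → Prop) (γ : V → V → ℕ) (u v : V) : Prop :=
  (outColors A γ u, inColors A γ u) ≠ (outColors A γ v, inColors A γ v)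

/-- Neighbour-distinguishing arc-colouring. -/
def NDArc (A : V → V → Prop) (γ : V → V → ℕ) : Prop :=
  ∀ u v, A u v → Distinguished A γ u v

/-- `D` has a neighbour-distinguishing proper arc-colouring with `k` colours. -/
def HasNDColoring (A : V → V → Prop) (k : ℕ) : Prop :=
  ∃ γ : V → V → ℕ, (∀ u v, A u v → γ u v < k) ∧ ProperArc A γ ∧ NDArc A γ

/-- `D` has a proper arc-colouring with `k` colours. -/
def HasProperColoring (A : V → V → Prop) (k : ℕ) : Prop :=
  ∃ γ : V → V → ℕ, (∀ u v, A u v → γ u v < k) ∧ ProperArc A γ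

/-- Outdegree of `u`. -/
def outDeg [Fintype V] (A : V → V → Prop) [DecidableRel A] (u : V) : ℕ :=
  (Finset.univ.filter fun v => A u v).card

/-- Indegree of `u`. -/
def inDeg [Fintype V] (A : V → V → Prop) [DecidableRel A] (u : V) : ℕ :=
  (Finset.univ.filter fun v => A v u).card

/-- Δ*(D) = max{Δ⁺(D), Δ⁻(D)}. -/
def maxDeg [Fintype V] (A : V → V → Prop) [DecidableRel A] : ℕ :=
  max (Finset.univ.sup (outDeg A)) (Finset.univ.sup (inDeg A))

end Defs

section VizingAux

set_option linter.unusedSectionVars false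
set_option linter.unusedVariables false

open Finset

variable {V : Type*} [Fintype V] [DecidableEq V]

/-- A good partial edge colouring of `G` with colours `< k`. -/
def VGood (G : SimpleGraph V) (k : ℕ) (c : V → V → Option ℕ) : Prop :=
  (∀ u v, c u v = c v u) ∧
  (∀ u v, c u v ≠ none → G.Adj u v) ∧
  (∀ u v a, c u v = some a → a < k) ∧
  (∀ u v w, v ≠ w → c u v ≠ none → c u v ≠ c u w)

/-- Colour `a` does not appear on any edge at `x`. -/
def VFree (c : V → V → Option ℕ) (x : V) (a : ℕ) : Prop := ∀ w, c x w ≠ some a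

lemma vfree_exists {G : SimpleGraph V} [DecidableRel G.Adj] {k : ℕ} {c : V → V → Option ℕ}
    (hc : VGood G k c) (x : V) (hd : G.degree x < k) : ∃ a, a < k ∧ VFree c x a := by
  classical
  obtain ⟨hsym, hsupp, hbd, hprop⟩ := hc
  set U : Finset ℕ := ((G.neighborFinset x).filter (fun w => (c x w).isSome)).image
      (fun w => (c x w).getD 0) with hU
  have hcard : U.card ≤ G.degree x :=
    le_trans (Finset.card_image_le) (Finset.card_filter_le _ _)
  have hns : ¬ ((Finset.range k) ⊆ U) := by
    intro h
    have := Finset.card_le_card h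
    simp only [Finset.card_range] at this
    omega
  obtain ⟨a, ha, haU⟩ := Finset.not_subset.mp hns
  refine ⟨a, Finset.mem_range.mp ha, fun w hw => ?_⟩
  apply haU
  have hadj : G.Adj x w := hsupp x w (by simp [hw])
  refine Finset.mem_image.mpr ⟨w, ?_, ?_⟩
  · simp [Finset.mem_filter, SimpleGraph.mem_neighborFinset, hadj, hw]
  · simp [hw]

/-- Update the colour of edge `xy` (both directions). -/
def vupd (c : V → V → Option ℕ) (x y : V) (o : Option ℕ) : V → V → Option ℕ :=
  fun u v => if (u = x ∧ v = y) ∨ (u = y ∧ v = x) then o else c u v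

lemma vupd_fst (c : V → V → Option ℕ) (x y : V) (o : Option ℕ) : vupd c x y o x y = o := by
  simp [vupd]

lemma vupd_snd (c : V → V → Option ℕ) (x y : V) (o : Option ℕ) : vupd c x y o y x = o := by
  simp [vupd]

lemma vupd_other (c : V → V → Option ℕ) (x y : V) (o : Option ℕ) {u v : V}
    (h : ¬ ((u = x ∧ v = y) ∨ (u = y ∧ v = x))) : vupd c x y o u v = c u v := by
  simp only [vupd, if_neg h]

lemma vupd_symm {c : V → V → Option ℕ} (hsym : ∀ u v, c u v = c v u) (x y : V) (o : Option ℕ) :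
    ∀ u v, vupd c x y o u v = vupd c x y o v u := by
  intro u v; unfold vupd
  by_cases h : (u = x ∧ v = y) ∨ (u = y ∧ v = x)
  · rw [if_pos h, if_pos (by tauto)]
  · rw [if_neg h, if_neg (by tauto), hsym]

lemma vupd_good_some {G : SimpleGraph V} {k : ℕ} {c : V → V → Option ℕ}
    (hc : VGood G k c) {x y : V} (hadj : G.Adj x y) {a : ℕ} (ha : a < k)
    (hfx : VFree c x a) (hfy : VFree c y a) : VGood G k (vupd c x y (some a)) := by
  obtain ⟨hsym, hsupp, hbd, hprop⟩ := hc
  have hxy : x ≠ y := hadj.ne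
  refine ⟨vupd_symm hsym x y _, ?_, ?_, ?_⟩
  · intro u v h
    by_cases hcase : (u = x ∧ v = y) ∨ (u = y ∧ v = x)
    · rcases hcase with ⟨rfl, rfl⟩ | ⟨rfl, rfl⟩
      · exact hadj
      · exact hadj.symm
    · exact hsupp u v (by rwa [vupd_other c x y _ hcase] at h)
  · intro u v b hb
    by_cases hcase : (u = x ∧ v = y) ∨ (u = y ∧ v = x)
    · simp only [vupd, if_pos hcase, Option.some.injEq] at hb; omega
    · exact hbd u v b (by rwa [vupd_other c x y _ hcase] at hb)
  · intro u v w hvw hne heq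
    by_cases h1 : (u = x ∧ v = y) ∨ (u = y ∧ v = x)
    · have huv : vupd c x y (some a) u v = some a := by simp only [vupd, if_pos h1]
      by_cases h2 : (u = x ∧ w = y) ∨ (u = y ∧ w = x)
      · rcases h1 with ⟨rfl, rfl⟩ | ⟨rfl, rfl⟩ <;> rcases h2 with ⟨h2a, rfl⟩ | ⟨h2a, rfl⟩ <;>
          first | exact hvw rfl | exact absurd h2a hxy | exact absurd h2a.symm hxy
      · rw [huv, vupd_other c x y _ h2] at heq
        rcases h1 with ⟨rfl, rfl⟩ | ⟨rfl, rfl⟩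
        · exact hfx w heq.symm
        · exact hfy w heq.symm
    · rw [vupd_other c x y _ h1] at hne heq
      by_cases h2 : (u = x ∧ w = y) ∨ (u = y ∧ w = x)
      · have huw : vupd c x y (some a) u w = some a := by simp only [vupd, if_pos h2]
        rw [huw] at heq
        rcases h2 with ⟨rfl, _⟩ | ⟨rfl, _⟩
        · exact hfx v heq
        · exact hfy v heq
      · rw [vupd_other c x y _ h2] at heq
        exact hprop u v w hvw hne heq

lemma vupd_good_none {G : SimpleGraph V} {k : ℕ} {c : V → V → Option ℕ}
    (hc : VGood G k c) (x y : V) : VGood G k (vupd c x y none) := by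
  obtain ⟨hsym, hsupp, hbd, hprop⟩ := hc
  refine ⟨vupd_symm hsym x y _, ?_, ?_, ?_⟩
  · intro u v h
    by_cases hcase : (u = x ∧ v = y) ∨ (u = y ∧ v = x)
    · simp [vupd, hcase] at h
    · exact hsupp u v (by rwa [vupd_other c x y _ hcase] at h)
  · intro u v b hb
    by_cases hcase : (u = x ∧ v = y) ∨ (u = y ∧ v = x)
    · simp [vupd, hcase] at hb
    · exact hbd u v b (by rwa [vupd_other c x y _ hcase] at hb)
  · intro u v w hvw hne heq
    by_cases h1 : (u = x ∧ v = y) ∨ (u = y ∧ v = x)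
    · simp only [vupd, if_pos h1, ne_eq, not_true_eq_false] at hne
    · rw [vupd_other c x y _ h1] at hne heq
      by_cases h2 : (u = x ∧ w = y) ∨ (u = y ∧ w = x)
      · simp only [vupd, if_pos h2] at heq; exact hne heq
      · rw [vupd_other c x y _ h2] at heq
        exact hprop u v w hvw hne heq

/-- The α/β subgraph of a symmetric colouring. -/
def abG (c : V → V → Option ℕ) (hsym : ∀ u v, c u v = c v u) (α β : ℕ) : SimpleGraph V where
  Adj u v := u ≠ v ∧ (c u v = some α ∨ c u v = some β)
  symm := ⟨by
    rintro u v ⟨h1, h2⟩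
    exact ⟨h1.symm, by rwa [hsym v u]⟩⟩
  loopless := ⟨fun u h => h.1 rfl⟩

/-- at most 2 αβ-neighbours. -/
lemma abG_two {G : SimpleGraph V} {k : ℕ} {c : V → V → Option ℕ} {α β : ℕ}
    (hc : VGood G k c) (hsym : ∀ u v, c u v = c v u) {z w1 w2 w3 : V}
    (h1 : (abG c hsym α β).Adj z w1) (h2 : (abG c hsym α β).Adj z w2)
    (h3 : (abG c hsym α β).Adj z w3) (h12 : w1 ≠ w2) (h13 : w1 ≠ w3) (h23 : w2 ≠ w3) : False := by
  obtain ⟨-, -, -, hprop⟩ := hc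
  obtain ⟨-, e1⟩ := h1; obtain ⟨-, e2⟩ := h2; obtain ⟨-, e3⟩ := h3
  rcases e1 with e1 | e1 <;> rcases e2 with e2 | e2 <;> rcases e3 with e3 | e3
  · exact hprop z w1 w2 h12 (by simp [e1]) (by rw [e1, e2])
  · exact hprop z w1 w2 h12 (by simp [e1]) (by rw [e1, e2])
  · exact hprop z w1 w3 h13 (by simp [e1]) (by rw [e1, e3])
  · exact hprop z w2 w3 h23 (by simp [e2]) (by rw [e2, e3])
  · exact hprop z w2 w3 h23 (by simp [e2]) (by rw [e2, e3])
  · exact hprop z w1 w3 h13 (by simp [e1]) (by rw [e1, e3])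
  · exact hprop z w1 w2 h12 (by simp [e1]) (by rw [e1, e2])
  · exact hprop z w1 w2 h12 (by simp [e1]) (by rw [e1, e2])

/-- a vertex missing α or β has at most 1 αβ-neighbour. -/
lemma abG_one {G : SimpleGraph V} {k : ℕ} {c : V → V → Option ℕ} {α β : ℕ}
    (hc : VGood G k c) (hsym : ∀ u v, c u v = c v u) {z w1 w2 : V}
    (hf : VFree c z α ∨ VFree c z β)
    (h1 : (abG c hsym α β).Adj z w1) (h2 : (abG c hsym α β).Adj z w2) (h12 : w1 ≠ w2) : False := by
  obtain ⟨-, -, -, hprop⟩ := hc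
  obtain ⟨-, e1⟩ := h1; obtain ⟨-, e2⟩ := h2
  rcases hf with hf | hf
  · rcases e1 with e1 | e1
    · exact hf w1 e1
    · rcases e2 with e2 | e2
      · exact hf w2 e2
      · exact hprop z w1 w2 h12 (by simp [e1]) (by rw [e1, e2])
  · rcases e1 with e1 | e1
    · rcases e2 with e2 | e2
      · exact hprop z w1 w2 h12 (by simp [e1]) (by rw [e1, e2])
      · exact hf w2 e2
    · exact hf w1 e1

/-- swap of two colours on an optional value -/
def swampC (α β : ℕ) (o : Option ℕ) : Option ℕ :=
  if o = some α then some β else if o = some β then some α else o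

lemma swampC_invol {α β : ℕ} (hab : α ≠ β) (o : Option ℕ) :
    swampC α β (swampC α β o) = o := by
  have hba : β ≠ α := fun h => hab h.symm
  unfold swampC
  by_cases h1 : o = some α <;> by_cases h2 : o = some β <;> simp [h1, h2, hab, hba]

lemma swampC_inj {α β : ℕ} (hab : α ≠ β) {o1 o2 : Option ℕ}
    (h : swampC α β o1 = swampC α β o2) : o1 = o2 := by
  rw [← swampC_invol hab o1, h, swampC_invol hab o2]

lemma swampC_none {α β : ℕ} {o : Option ℕ} : swampC α β o = none ↔ o = none := by
  unfold swampC
  by_cases h1 : o = some α <;> by_cases h2 : o = some β <;> simp_all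

lemma swampC_eq_some_alpha {α β : ℕ} (hab : α ≠ β) {o : Option ℕ} :
    swampC α β o = some α ↔ o = some β := by
  have hba : β ≠ α := fun h => hab h.symm
  unfold swampC
  by_cases h1 : o = some α <;> by_cases h2 : o = some β <;> simp_all

open Classical in
/-- flip the colours α, β on all edges touching `S`. -/
noncomputable def vflip (c : V → V → Option ℕ) (α β : ℕ) (S : Set V) : V → V → Option ℕ :=
  fun u v => if u ∈ S ∨ v ∈ S then swampC α β (c u v) else c u v

section Flip

variable {G : SimpleGraph V} {k : ℕ} {c : V → V → Option ℕ} {α β : ℕ}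
  {hsym : ∀ u v, c u v = c v u} {S : Set V}

lemma vflip_mem (hu : u ∈ S) (v : V) : vflip c α β S u v = swampC α β (c u v) := by
  simp [vflip, hu]

lemma vflip_not_mem (hc : VGood G k c) (hsymm : ∀ u v, c u v = c v u)
    (hS : ∀ p q, p ∈ S → (abG c hsymm α β).Adj p q → q ∈ S)
    {u : V} (hu : u ∉ S) (v : V) : vflip c α β S u v = c u v := by
  by_cases hv : v ∈ S
  · have hne : u ≠ v := fun h => hu (h ▸ hv)
    have hno : ¬ (c u v = some α ∨ c u v = some β) := by
      intro hor
      exact hu (hS v u hv ⟨hne.symm, by rwa [hsymm u v] at hor⟩)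
    push_neg at hno
    simp [vflip, hv, swampC, hno.1, hno.2]
  · simp [vflip, hu, hv]

lemma vflip_good (hc : VGood G k c) (hsymm : ∀ u v, c u v = c v u)
    (hS : ∀ p q, p ∈ S → (abG c hsymm α β).Adj p q → q ∈ S)
    (hab : α ≠ β) (hαk : α < k) (hβk : β < k) : VGood G k (vflip c α β S) := by
  obtain ⟨hsym', hsupp, hbd, hprop⟩ := hc
  refine ⟨?_, ?_, ?_, ?_⟩
  · intro u v
    unfold vflip
    by_cases h : u ∈ S ∨ v ∈ S
    · rw [if_pos h, if_pos (Or.symm h), hsymm]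
    · rw [if_neg h, if_neg (fun h' => h (Or.symm h')), hsymm]
  · intro u v h
    apply hsupp
    intro hn
    unfold vflip at h
    by_cases hcase : u ∈ S ∨ v ∈ S
    · rw [if_pos hcase, hn] at h; simp [swampC] at h
    · rw [if_neg hcase] at h; exact h hn
  · intro u v a ha
    by_cases hcase : u ∈ S ∨ v ∈ S
    · simp only [vflip, if_pos hcase] at ha
      unfold swampC at ha
      split_ifs at ha with h1 h2
      · obtain rfl : β = a := by injection ha
        exact hβk
      · obtain rfl : α = a := by injection ha
        exact hαk
      · exact hbd u v a ha
    · simp only [vflip, if_neg hcase] at ha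
      exact hbd u v a ha
  · intro u v w hvw hne heq
    by_cases hu : u ∈ S
    · simp only [vflip_mem hu] at heq hne ⊢
      have := swampC_inj hab heq
      exact hprop u v w hvw (fun h => hne (by rw [h]; simp [swampC])) this
    · simp only [vflip_not_mem ⟨hsym', hsupp, hbd, hprop⟩ hsymm hS hu] at heq hne ⊢
      exact hprop u v w hvw hne heq

lemma vflip_none_iff (u v : V) : vflip c α β S u v = none ↔ c u v = none := by
  unfold vflip
  by_cases h : u ∈ S ∨ v ∈ S
  · rw [if_pos h]; exact swampC_none
  · rw [if_neg h]

lemma vflip_free_mem (hab : α ≠ β) {p : V} (hp : p ∈ S) (hf : VFree c p β) :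
    VFree (vflip c α β S) p α := by
  intro w hw
  rw [vflip_mem hp, swampC_eq_some_alpha hab] at hw
  exact hf w hw

lemma vflip_free_not_mem (hc : VGood G k c) (hsymm : ∀ u v, c u v = c v u)
    (hS : ∀ p q, p ∈ S → (abG c hsymm α β).Adj p q → q ∈ S)
    {p : V} (hp : p ∉ S) {a : ℕ} (hf : VFree c p a) : VFree (vflip c α β S) p a := by
  intro w hw
  rw [vflip_not_mem hc hsymm hS hp] at hw
  exact hf w hw

end Flip

open SimpleGraph

/-- In a graph with max degree
 ≤ 2, two paths from a vertex of degree ≤ 1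
  (or from a vertex with a spare unexplored neighbour) are comparable. -/
lemma walk_comp {H : SimpleGraph V}
    (h2 : ∀ z w1 w2 w3, H.Adj z w1 → H.Adj z w2 → H.Adj z w3 →
      w1 ≠ w2 → w1 ≠ w3 → w2 ≠ w3 → False) :
    ∀ n (u b d : V) (p : H.Walk u b) (q : H.Walk u d), p.length + q.length ≤ n →
      p.IsPath → q.IsPath →
      ((∀ w1 w2, H.Adj u w1 → H.Adj u w2 → w1 = w2) ∨
        (∃ a, H.Adj u a ∧ a ∉ p.support ∧ a ∉ q.support)) →
      b ∈ q.support ∨ d ∈ p.support := by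
  intro n
  induction n with
  | zero =>
    intro u b d p q hlen hp hq hdeg
    cases p with
    | nil => exact Or.inl q.start_mem_support
    | cons h p' => simp [Walk.length_cons] at hlen
  | succ n ih =>
    intro u b d p q hlen hp hq hdeg
    cases p with
    | nil => exact Or.inl q.start_mem_support
    | cons hadj p' =>
      cases q with
      | nil => exact Or.inr (Walk.cons hadj p').start_mem_support
      | cons hadj2 q' =>
        rename_i u' u''
        -- first steps agree
        have huu : u' = u'' := by
          rcases hdeg with hdeg | ⟨a, haadj, hap, haq⟩
          · exact hdeg u' u'' hadj hadj2
          · by_contra hne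
            have hau' : a ≠ u' := by
              intro h; subst h
              exact hap (by simp [Walk.support_cons, Walk.start_mem_support])
            have hau'' : a ≠ u'' := by
              intro h; subst h
              exact haq (by simp [Walk.support_cons, Walk.start_mem_support])
            exact h2 u a u' u'' haadj hadj hadj2 hau' hau'' hne
        subst huu
        have hp' : p'.IsPath ∧ u ∉ p'.support := (Walk.cons_isPath_iff hadj p').mp hp
        have hq' : q'.IsPath ∧ u ∉ q'.support := (Walk.cons_isPath_iff hadj2 q').mp hq
        have hres := ih u' b d p' q' (by simp [Walk.length_cons] at hlen; omega)
          hp'.1 hq'.1 (Or.inr ⟨u, hadj.symm, hp'.2, hq'.2⟩)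
        rcases hres with h | h
        · exact Or.inl (by simp [Walk.support_cons]; tauto)
        · exact Or.inr (by simp [Walk.support_cons]; tauto)

/-- A vertex of degree ≤ 1 cannot be interior on a path. -/
lemma interior_deg {H : SimpleGraph V} {z a d : V}
    (h1z : ∀ w1 w2, H.Adj z w1 → H.Adj z w2 → w1 = w2)
    (q : H.Walk a d) (hq : q.IsPath) (hz : z ∈ q.support) (hza : z ≠ a) (hzd : z ≠ d) :
    False := by
  classical
  set q1 := q.takeUntil z hz with hq1
  set q2 := q.dropUntil z hz with hq2
  have hspec : q1.append q2 = q := q.take_spec hz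
  have hnodup : (q1.support ++ q2.support.tail).Nodup := by
    have := hq.support_nodup
    rwa [← hspec, Walk.support_append] at this
  have hdisj := List.disjoint_of_nodup_append hnodup
  -- q1 : a → z nontrivial; its reverse is a cons
  have hq1r : q1.reverse.IsPath := (Walk.isPath_reverse_iff q1).mpr (hq.takeUntil hz)
  cases hr : q1.reverse with
  | nil => exact hza rfl
  | cons h1 r1 =>
    rename_i n1
    cases hs : q2 with
    | nil => exact hzd rfl
    | cons h2 r2 =>
      rename_i n2
      have hn : n1 = n2 := h1z n1 n2 h1 h2
      have hn1 : n1 ∈ q1.support := by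
        have : n1 ∈ q1.reverse.support := by
          rw [hr]; simp [Walk.support_cons, Walk.start_mem_support]
        rwa [Walk.support_reverse, List.mem_reverse] at this
      have hn2 : n2 ∈ q2.support.tail := by
        rw [hs]
        simp only [Walk.support_cons, List.tail_cons]
        exact Walk.start_mem_support r2
      exact hdisj hn1 (hn ▸ hn2)

/-- Three distinct vertices of degree ≤ 1 cannot lie in one component of a max-degree-2 graph. -/
lemma no_three {H : SimpleGraph V}
    (h2 : ∀ z w1 w2 w3, H.Adj z w1 → H.Adj z w2 → H.Adj z w3 →
      w1 ≠ w2 → w1 ≠ w3 → w2 ≠ w3 → False)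
    {a b d : V}
    (h1a : ∀ w1 w2, H.Adj a w1 → H.Adj a w2 → w1 = w2)
    (h1b : ∀ w1 w2, H.Adj b w1 → H.Adj b w2 → w1 = w2)
    (h1d : ∀ w1 w2, H.Adj d w1 → H.Adj d w2 → w1 = w2)
    (hab : a ≠ b) (had : a ≠ d) (hbd : b ≠ d)
    (r1 : H.Reachable a b) (r2 : H.Reachable a d) : False := by
  classical
  obtain ⟨w1⟩ := r1
  obtain ⟨w2⟩ := r2
  set p := w1.toPath with hp
  set q := w2.toPath with hq
  have hcomp := walk_comp h2 (p.1.length + q.1.length) a b d p.1 q.1 le_rfl p.2 q.2 (Or.inl h1a)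
  rcases hcomp with h | h
  · exact interior_deg h1b q.1 q.2 h hab.symm hbd
  · exact interior_deg h1d p.1 p.2 h had.symm (Ne.symm hbd)

section Rotation

variable {G : SimpleGraph V} {k : ℕ} {c : V → V → Option ℕ} {x : V} {y : ℕ → V} {t : ℕ}

/-- Rotating a fan. -/
lemma rotate (hc : VGood G k c)
    (f0 : c x (y 0) = none)
    (f1 : ∀ i ≤ t, G.Adj x (y i))
    (f2 : ∀ i j, i ≤ t → j ≤ t → i ≠ j → y i ≠ y j)
    (f3 : ∀ i < t, ∃ b, c x (y (i+1)) = some b ∧ VFree c (y i) b) :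
    ∀ i, i ≤ t → ∃ ci : V → V → Option ℕ, VGood G k ci ∧
      ci x (y i) = none ∧
      (∀ u v, u ≠ x → v ≠ x → ci u v = c u v) ∧
      (∀ w, (∀ m ≤ i, w ≠ y m) → ci x w = c x w) ∧
      (∀ m, m < i → ci x (y m) = c x (y (m+1))) ∧
      (∀ u v, c u v ≠ none → ((u = x ∧ v = y i) ∨ (u = y i ∧ v = x)) ∨ ci u v ≠ none) ∧
      (∀ b, VFree c x b → VFree ci x b) ∧
      (∀ b, VFree ci x b → VFree c x b) := by
  have hxy : ∀ m, m ≤ t → x ≠ y m := fun m hm => (f1 m hm).ne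
  intro i
  induction i with
  | zero =>
    intro _
    exact ⟨c, hc, f0, fun _ _ _ _ => rfl, fun _ _ => rfl, fun m hm => absurd hm (by omega),
      fun u v h => Or.inr h, fun b hb => hb, fun b hb => hb⟩
  | succ i ih =>
    intro hit
    obtain ⟨ci, hgood, hR1, hR2, hR3, hR4, hR5, hR7a, hR7b⟩ := ih (by omega)
    obtain ⟨b, hb, hbfree⟩ := f3 i (by omega)
    have hbk : b < k := hc.2.2.1 x (y (i+1)) b hb
    have hxyi : x ≠ y i := hxy i (by omega)
    have hxyi1 : x ≠ y (i+1) := hxy (i+1) hit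
    have hyii1 : y i ≠ y (i+1) := f2 i (i+1) (by omega) hit (by omega)
    have hci_i1 : ci x (y (i+1)) = some b := by
      rw [hR3 (y (i+1)) (fun m hm => f2 (i+1) m hit (by omega) (by omega))]
      exact hb
    set c' := vupd ci x (y (i+1)) none with hc'
    have hgood' : VGood G k c' := vupd_good_none hgood x (y (i+1))
    have hc'_at : ∀ u v, ¬((u = x ∧ v = y (i+1)) ∨ (u = y (i+1) ∧ v = x)) → c' u v = ci u v :=
      fun u v h => vupd_other ci x (y (i+1)) none h
    have hfx : VFree c' x b := by
      intro w hw
      by_cases hwi : w = y (i+1)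
      · subst hwi
        rw [hc', vupd_fst] at hw
        exact nomatch hw
      · rw [hc'_at x w (by rintro (⟨-, h⟩ | ⟨h, -⟩); exact hwi h; exact hxyi1 h)] at hw
        have := hgood.2.2.2 x w (y (i+1)) hwi (by simp [hw])
        rw [hw, hci_i1] at this
        exact this rfl
    have hfyi : VFree c' (y i) b := by
      intro w hw
      have hcond : ¬(((y i) = x ∧ w = y (i+1)) ∨ ((y i) = y (i+1) ∧ w = x)) := by
        rintro (⟨h, -⟩ | ⟨h, -⟩)
        · exact hxyi h.symm
        · exact hyii1 h
      rw [hc'_at (y i) w hcond] at hw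
      by_cases hwx : w = x
      · rw [hwx] at hw
        rw [hgood.1 (y i) x, hR1] at hw
        exact nomatch hw
      · rw [hR2 (y i) w (fun h => hxyi h.symm) hwx] at hw
        exact hbfree w hw
    set ci1 := vupd c' x (y i) (some b) with hci1
    have hgood1 : VGood G k ci1 := vupd_good_some hgood' (f1 i (by omega)) hbk hfx hfyi
    have hcond1 : ∀ u v, u ≠ x → v ≠ x →
        ¬((u = x ∧ v = y i) ∨ (u = y i ∧ v = x)) := by
      rintro u v hu hv (⟨h, -⟩ | ⟨-, h⟩)
      · exact hu h
      · exact hv h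
    have hci1_other : ∀ {u v : V}, ¬((u = x ∧ v = y i) ∨ (u = y i ∧ v = x)) → ci1 u v = c' u v :=
      fun h => vupd_other c' x (y i) (some b) h
    -- R4 for i+1 (needed twice)
    have hR4' : ∀ m, m < i + 1 → ci1 x (y m) = c x (y (m+1)) := by
      intro m hm
      by_cases hmi : m = i
      · subst hmi
        rw [hci1, vupd_fst, hb]
      · have hym : y m ≠ y i := f2 m i (by omega) (by omega) hmi
        rw [hci1_other (by rintro (⟨-, h⟩ | ⟨h, -⟩); exact hym h; exact hxyi h)]
        rw [hc'_at x (y m) (by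
          rintro (⟨-, h⟩ | ⟨h, -⟩)
          · exact f2 m (i+1) (by omega) hit (by omega) h
          · exact hxyi1 h)]
        exact hR4 m (by omega)
    have hR3' : ∀ w, (∀ m, m ≤ i + 1 → w ≠ y m) → ci1 x w = c x w := by
      intro w hmw
      rw [hci1_other (by rintro (⟨-, h⟩ | ⟨h, -⟩); exact hmw i (by omega) h; exact hxyi h)]
      rw [hc'_at x w (by rintro (⟨-, h⟩ | ⟨h, -⟩); exact hmw (i+1) le_rfl h; exact hxyi1 h)]
      exact hR3 w (fun m hm => hmw m (by omega))
    refine ⟨ci1, hgood1, ?_, ?_, hR3', hR4', ?_, ?_, ?_⟩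
    · -- R1
      rw [hci1_other (by rintro (⟨-, h⟩ | ⟨h, -⟩); exact hyii1 h.symm; exact hxyi h), hc',
        vupd_fst]
    · -- R2
      intro u v hu hv
      rw [hci1_other (hcond1 u v hu hv)]
      rw [hc'_at u v (by rintro (⟨h, -⟩ | ⟨-, h⟩); exact hu h; exact hv h)]
      exact hR2 u v hu hv
    · -- R5
      intro u v hne
      rcases hR5 u v hne with hcase | hci
      · refine Or.inr ?_
        rcases hcase with ⟨rfl, rfl⟩ | ⟨rfl, rfl⟩
        · rw [hci1, vupd_fst]; exact nofun
        · rw [hci1, vupd_snd]; exact nofun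
      · by_cases h1 : (u = x ∧ v = y (i+1)) ∨ (u = y (i+1) ∧ v = x)
        · exact Or.inl h1
        · refine Or.inr ?_
          by_cases h2 : (u = x ∧ v = y i) ∨ (u = y i ∧ v = x)
          · rcases h2 with ⟨rfl, rfl⟩ | ⟨rfl, rfl⟩
            · rw [hci1, vupd_fst]; exact nofun
            · rw [hci1, vupd_snd]; exact nofun
          · rw [hci1_other h2, hc'_at u v h1]
            exact hci
    · -- R7a
      intro b' hfree w hw
      have hb'b : b' ≠ b := by
        intro h; subst h
        exact hfree (y (i+1)) hb
      by_cases hwi : w = y i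
      · subst hwi
        rw [hci1, vupd_fst] at hw
        exact hb'b (by injection hw with h; omega)
      · rw [hci1_other (by rintro (⟨-, h⟩ | ⟨h, -⟩); exact hwi h; exact hxyi h)] at hw
        by_cases hwi1 : w = y (i+1)
        · subst hwi1
          rw [hc', vupd_fst] at hw
          exact nomatch hw
        · rw [hc'_at x w (by rintro (⟨-, h⟩ | ⟨h, -⟩); exact hwi1 h; exact hxyi1 h)] at hw
          exact hR7a b' hfree w hw
    · -- R7b
      intro b' hfree
      intro w hw
      by_cases hbb : b' = b
      · subst hbb
        exact hfree (y i) (by rw [hci1, vupd_fst])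
      · by_cases hwfan : ∃ m, m ≤ i + 1 ∧ w = y m
        · obtain ⟨m, hm, rfl⟩ := hwfan
          rcases Nat.eq_zero_or_pos m with rfl | hmpos
          · rw [f0] at hw
            exact nomatch hw
          · by_cases hmi1 : m = i + 1
            · subst hmi1
              rw [hb] at hw
              exact hbb (by injection hw with h; omega)
            · obtain ⟨m', rfl⟩ : ∃ m', m = m' + 1 := ⟨m - 1, by omega⟩
              exact hfree (y m') (by rw [hR4' m' (by omega)]; exact hw)
        · push_neg at hwfan
          exact hfree w (by rw [hR3' w (fun m hm => hwfan m hm)]; exact hw)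

end Rotation

section Fan

variable {G : SimpleGraph V} {k : ℕ} {c : V → V → Option ℕ} {x y₀ : V}

lemma fan_exists (hc : VGood G k c) (hadj : G.Adj x y₀) (hnone : c x y₀ = none) :
    ∃ (t : ℕ) (y : ℕ → V), y 0 = y₀ ∧
      (∀ i ≤ t, G.Adj x (y i)) ∧
      (∀ i j, i ≤ t → j ≤ t → i ≠ j → y i ≠ y j) ∧
      (∀ i < t, ∃ b, c x (y (i+1)) = some b ∧ VFree c (y i) b) ∧
      (∀ w b, G.Adj x w → (∀ m ≤ t, w ≠ y m) → c x w = some b → ¬ VFree c (y t) b) := by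
  classical
  set P : ℕ → Prop := fun n => ∃ y : ℕ → V, y 0 = y₀ ∧
      (∀ i ≤ n, G.Adj x (y i)) ∧
      (∀ i j, i ≤ n → j ≤ n → i ≠ j → y i ≠ y j) ∧
      (∀ i < n, ∃ b, c x (y (i+1)) = some b ∧ VFree c (y i) b) with hP
  have hP0 : P 0 := by
    refine ⟨fun _ => y₀, rfl, fun i hi => by simpa using hadj, ?_, ?_⟩
    · intro i j hi hj hij; omega
    · intro i hi; omega
  have hbound : ∀ n, P n → n < Fintype.card V := by
    intro n ⟨y, hy0, hadjf, hinj, hfc⟩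
    have : ((Finset.range (n+1)).image y).card = n + 1 := by
      rw [Finset.card_image_of_injOn, Finset.card_range]
      intro i hi j hj hij
      by_contra hne
      exact hinj i j (by simpa using Nat.lt_succ_iff.mp (Finset.mem_range.mp hi))
        (by simpa using Nat.lt_succ_iff.mp (Finset.mem_range.mp hj)) hne hij
    have h2 : ((Finset.range (n+1)).image y).card ≤ Fintype.card V :=
      le_trans (Finset.card_le_card (Finset.subset_univ _)) (by simp)
    omega
  have hmaxex : ∃ t, P t ∧ ¬ P (t+1) := by
    by_contra h
    push_neg at h
    have hall : ∀ n, P n := by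
      intro n
      induction n with
      | zero => exact hP0
      | succ n ih => exact h n ih
    exact absurd (hbound (Fintype.card V) (hall _)) (by omega)
  obtain ⟨t, ⟨y, hy0, hadjf, hinj, hfc⟩, hnot⟩ := hmaxex
  refine ⟨t, y, hy0, hadjf, hinj, hfc, ?_⟩
  intro w b hwadj hwfan hwc hfree
  apply hnot
  refine ⟨fun i => if i ≤ t then y i else w, by simp [hy0], ?_, ?_, ?_⟩
  · intro i hi
    by_cases h : i ≤ t
    · simpa [h] using hadjf i h
    · simpa [h] using hwadj
  · intro i j hi hj hij
    by_cases h1 : i ≤ t <;> by_cases h2 : j ≤ t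
    · simpa [h1, h2] using hinj i j h1 h2 hij
    · simp only [if_pos h1, if_neg h2]
      exact fun he => hwfan i h1 he.symm
    · simp only [if_neg h1, if_pos h2]
      exact fun he => hwfan j h2 he
    · omega
  · intro i hi
    by_cases h : i < t
    · obtain ⟨b', hb', hf'⟩ := hfc i h
      refine ⟨b', ?_, ?_⟩
      · simpa [Nat.succ_le_of_lt h] using hb'
      · simpa [le_of_lt h] using hf'
    · have hieq : i = t := by omega
      subst hieq
      refine ⟨b, ?_, ?_⟩
      · simpa [Nat.lt_irrefl] using hwc
      · simpa using hfree

end Fan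

section Extend

variable {G : SimpleGraph V} [DecidableRel G.Adj] {k : ℕ} {c : V → V → Option ℕ} {x y₀ : V}

lemma vextend (hdeg : ∀ v, G.degree v < k) (hc : VGood G k c)
    (hadj : G.Adj x y₀) (hnone : c x y₀ = none) :
    ∃ c', VGood G k c' ∧ c' x y₀ ≠ none ∧ ∀ u v, c u v ≠ none → c' u v ≠ none := by
  classical
  obtain ⟨t, y, hy0, hadjf, hinj, hfc, hmax⟩ := fan_exists hc hadj hnone
  have hxy : ∀ m, m ≤ t → x ≠ y m := fun m hm => (hadjf m hm).ne
  have hf0 : c x (y 0) = none := by rw [hy0]; exact hnone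
  obtain ⟨α, hαk, hαfree⟩ := vfree_exists hc x (hdeg x)
  obtain ⟨β, hβk, hβfree⟩ := vfree_exists hc (y t) (hdeg (y t))
  by_cases hβx : VFree c x β
  · -- Case A : β is free at x too; rotate fully and colour x (y t) with β
    obtain ⟨ct, hgt, hT1, hT2, hT3, hT4, hT5, hT7a, hT7b⟩ :=
      rotate hc hf0 hadjf hinj hfc t le_rfl
    have hfxβ : VFree ct x β := hT7a β hβx
    have hfyβ : VFree ct (y t) β := by
      intro w hw
      by_cases hwx : w = x
      · rw [hwx, hgt.1 (y t) x, hT1] at hw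
        exact nomatch hw
      · rw [hT2 (y t) w (fun h => hxy t le_rfl h.symm) hwx] at hw
        exact hβfree w hw
    set c' := vupd ct x (y t) (some β) with hc'
    have hg' : VGood G k c' := vupd_good_some hgt (hadjf t le_rfl) hβk hfxβ hfyβ
    refine ⟨c', hg', ?_, ?_⟩
    · by_cases ht0 : t = 0
      · rw [← hy0, ← ht0, hc', vupd_fst]
        exact nofun
      · have hy0t : y₀ ≠ y t := by
          rw [← hy0]; exact hinj 0 t (by omega) le_rfl (by omega)
        rw [hc', vupd_other ct x (y t) _ (by
          rintro (⟨-, h⟩ | ⟨h, -⟩); exact hy0t h; exact hxy t le_rfl h)]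
        rw [← hy0, hT4 0 (by omega)]
        obtain ⟨b1, hb1, -⟩ := hfc 0 (by omega)
        rw [hb1]
        exact nofun
    · intro u v hne
      by_cases hpair : (u = x ∧ v = y t) ∨ (u = y t ∧ v = x)
      · rcases hpair with ⟨rfl, rfl⟩ | ⟨rfl, rfl⟩
        · rw [hc', vupd_fst]; exact nofun
        · rw [hc', vupd_snd]; exact nofun
      · rw [hc', vupd_other ct x (y t) _ hpair]
        rcases hT5 u v hne with h | h
        · exact absurd h hpair
        · exact h
  · -- Case B : β appears at x
    obtain ⟨w, hw⟩ := not_forall.mp hβx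
    have hw' : c x w = some β := not_not.mp hw
    have hex : ∃ m, m ≤ t ∧ w = y m := by
      by_contra hnf
      push_neg at hnf
      exact hmax w β (hc.2.1 x w (by simp [hw'])) hnf hw' hβfree
    obtain ⟨m, hmt, rfl⟩ := hex
    have hm0 : m ≠ 0 := by
      intro h
      rw [h, hy0, hnone] at hw'
      exact nomatch hw'
    have hmtne : m ≠ t := by
      intro h
      rw [h] at hw'
      exact hβfree x (by rw [hc.1 (y t) x]; exact hw')
    obtain ⟨j', rfl⟩ : ∃ j', m = j' + 1 := ⟨m - 1, by omega⟩
    have hj't : j' < t := by omega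
    obtain ⟨b', hb', hfb'⟩ := hfc j' hj't
    have hbβ : b' = β := by
      rw [hw'] at hb'
      injection hb' with h
      exact h.symm
    have hyj'β : VFree c (y j') β := by rwa [hbβ] at hfb'
    have hxj1β : c x (y (j'+1)) = some β := hw'
    have hαβ : α ≠ β := by
      intro h
      exact hαfree (y (j'+1)) (by rw [h]; exact hxj1β)
    set H := abG c hc.1 α β with hH
    have h2H : ∀ z w1 w2 w3, H.Adj z w1 → H.Adj z w2 → H.Adj z w3 →
        w1 ≠ w2 → w1 ≠ w3 → w2 ≠ w3 → False := fun z w1 w2 w3 => abG_two hc hc.1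
    have hdeg1 : ∀ z, (VFree c z α ∨ VFree c z β) →
        ∀ w1 w2, H.Adj z w1 → H.Adj z w2 → w1 = w2 := by
      intro z hf w1 w2 ha hb
      by_contra hne
      exact abG_one hc hc.1 hf ha hb hne
    have hytj' : y t ≠ y j' := fun h => hinj t j' le_rfl (by omega) (by omega) h
    by_cases hreach : H.Reachable (y t) (y j')
    · -- Case B1 : Kempe chain reaches y j'; rotate to j', flip, colour x (y j') with α
      obtain ⟨cj, hgj, hJ1, hJ2, hJ3, hJ4, hJ5, hJ7a, hJ7b⟩ :=
        rotate hc hf0 hadjf hinj hfc j' (by omega)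
      -- αβ-colours are unchanged by this rotation
      have hcolx : ∀ w, (cj x w = some α ∨ cj x w = some β) ↔
          (c x w = some α ∨ c x w = some β) := by
        intro w
        by_cases hwf : ∃ m, m ≤ j' ∧ w = y m
        · obtain ⟨m, hmj, rfl⟩ := hwf
          have hβu : ∀ i, i ≤ t → i ≠ j' + 1 → c x (y i) ≠ some β := by
            intro i hi hij h
            by_cases hi0 : i = 0
            · rw [hi0, hf0] at h; exact nomatch h
            · exact hc.2.2.2 x (y i) (y (j'+1))
                (hinj i (j'+1) hi (by omega) hij) (by simp [h]) (by rw [h, hxj1β])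
          have hrhs : ¬ (c x (y m) = some α ∨ c x (y m) = some β) := by
            rintro (h | h)
            · exact hαfree (y m) h
            · exact hβu m (by omega) (by omega) h
          by_cases hmj' : m = j'
          · subst hmj'
            simp only [hJ1]
            constructor
            · rintro (h | h) <;> exact nomatch h
            · intro h; exact absurd h hrhs
          · have hml : m < j' := by omega
            rw [hJ4 m hml]
            constructor
            · rintro (h | h)
              · exact absurd h (hαfree (y (m+1)))
              · exact absurd h (hβu (m+1) (by omega) (by omega))
            · intro h; exact absurd h hrhs
        · push_neg at hwf
          rw [hJ3 w hwf]
      have hcol : ∀ u v, ((abG cj hgj.1 α β).Adj u v ↔ H.Adj u v) := by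
        intro u v
        show (u ≠ v ∧ _) ↔ (u ≠ v ∧ _)
        refine and_congr_right fun _ => ?_
        by_cases hu : u = x
        · subst hu; exact hcolx v
        · by_cases hv : v = x
          · rw [hv, hgj.1 u x, hc.1 u x]
            exact hcolx u
          · rw [hJ2 u v hu hv]
      set S : Set V := {p | H.Reachable (y t) p} with hSdef
      have hSc : ∀ p q, p ∈ S → (abG cj hgj.1 α β).Adj p q → q ∈ S := by
        intro p q hp hadj'
        exact hp.trans ((hcol p q).mp hadj').reachable
      have hxS : x ∉ S := by
        intro hx
        exact no_three h2H (hdeg1 (y t) (Or.inr hβfree)) (hdeg1 (y j') (Or.inr hyj'β))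
          (hdeg1 x (Or.inl hαfree)) hytj' (hxy t le_rfl).symm
          (fun h => hxy j' (by omega) h.symm) hreach hx
      have hfjβ : VFree cj (y j') β := by
        intro w hw
        by_cases hwx : w = x
        · rw [hwx, hgj.1 (y j') x, hJ1] at hw
          exact nomatch hw
        · rw [hJ2 (y j') w (fun h => hxy j' (by omega) h.symm) hwx] at hw
          exact hyj'β w hw
      set c'' := vflip cj α β S with hc''
      have hg'' : VGood G k c'' := vflip_good hgj hgj.1 hSc hαβ hαk hβk
      have hfj''α : VFree c'' (y j') α := vflip_free_mem hαβ hreach hfjβ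
      have hfx''α : VFree c'' x α := vflip_free_not_mem hgj hgj.1 hSc hxS (hJ7a α hαfree)
      set c' := vupd c'' x (y j') (some α) with hc'
      have hg' : VGood G k c' := vupd_good_some hg'' (hadjf j' (by omega)) hαk hfx''α hfj''α
      refine ⟨c', hg', ?_, ?_⟩
      · by_cases hj0 : j' = 0
        · rw [← hy0, hc']
          have : y 0 = y j' := by rw [hj0]
          rw [this, vupd_fst]
          exact nofun
        · have hy0j : y₀ ≠ y j' := by
            rw [← hy0]; exact hinj 0 j' (by omega) (by omega) (fun h => hj0 h.symm)
          rw [hc', vupd_other c'' x (y j') _ (by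
            rintro (⟨-, h⟩ | ⟨h, -⟩); exact hy0j h; exact hxy j' (by omega) h)]
          intro h
          have h2 : cj x y₀ = none := (vflip_none_iff x y₀).mp h
          rw [← hy0, hJ4 0 (by omega)] at h2
          obtain ⟨b1, hb1, -⟩ := hfc 0 (by omega)
          rw [hb1] at h2
          exact nomatch h2
      · intro u v hne
        by_cases hpair : (u = x ∧ v = y j') ∨ (u = y j' ∧ v = x)
        · rcases hpair with ⟨rfl, rfl⟩ | ⟨rfl, rfl⟩
          · rw [hc', vupd_fst]; exact nofun
          · rw [hc', vupd_snd]; exact nofun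
        · rw [hc', vupd_other c'' x (y j') _ hpair]
          have hcj : cj u v ≠ none := by
            rcases hJ5 u v hne with h | h
            · exact absurd h hpair
            · exact h
          intro h
          exact hcj ((vflip_none_iff u v).mp h)
    · -- Case B2 : Kempe chain does not reach y j'; rotate fully, flip, colour x (y t) with α
      obtain ⟨ct, hgt, hT1, hT2, hT3, hT4, hT5, hT7a, hT7b⟩ :=
        rotate hc hf0 hadjf hinj hfc t le_rfl
      -- the unique αβ-edge of ct at x goes to y j'
      have hxuniq : ∀ w, (abG ct hgt.1 α β).Adj x w → w = y j' := by
        rintro w ⟨hne, hcolw⟩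
        have hctβ : ct x w = some β := by
          rcases hcolw with h | h
          · exact absurd h (hT7a α hαfree w)
          · exact h
        by_cases hwf : ∃ m, m ≤ t ∧ w = y m
        · obtain ⟨m, hm, rfl⟩ := hwf
          by_cases hmt2 : m = t
          · rw [hmt2, hT1] at hctβ
            exact nomatch hctβ
          · have hml : m < t := by omega
            rw [hT4 m hml] at hctβ
            by_cases hmj : m = j'
            · exact congrArg y hmj
            · exact absurd (by rw [hctβ, hxj1β] :
                  c x (y (m+1)) = c x (y (j'+1)))
                (hc.2.2.2 x (y (m+1)) (y (j'+1))
                  (hinj (m+1) (j'+1) (by omega) (by omega) (by omega))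
                  (by simp [hctβ]))
        · push_neg at hwf
          rw [hT3 w hwf] at hctβ
          have hwne : w ≠ y (j'+1) := hwf (j'+1) (by omega)
          exact absurd (by rw [hctβ, hxj1β] : c x w = c x (y (j'+1)))
            (hc.2.2.2 x w (y (j'+1)) hwne (by simp [hctβ]))
      set S : Set V := {p | Relation.ReflTransGen ((abG ct hgt.1 α β).Adj) (y t) p} with hSdef
      have hSc : ∀ p q, p ∈ S → (abG ct hgt.1 α β).Adj p q → q ∈ S :=
        fun p q hp ha => Relation.ReflTransGen.tail hp ha
      have hsub : ∀ p, p ∈ S → H.Reachable (y t) p ∧ p ≠ x := by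
        intro p hp
        induction hp with
        | refl => exact ⟨SimpleGraph.Reachable.refl _, (hxy t le_rfl).symm⟩
        | @tail q r hq hadj' ih =>
          have hqx : q ≠ x := ih.2
          have hrx : r ≠ x := by
            intro hrfl
            have : q = y j' := hxuniq q (by rw [hrfl] at hadj'; exact hadj'.symm)
            rw [this] at ih
            exact hreach ih.1
          have hHqr : H.Adj q r := by
            obtain ⟨hne, hcols⟩ := hadj'
            refine ⟨hne, ?_⟩
            rwa [hT2 q r hqx hrx] at hcols
          exact ⟨ih.1.trans hHqr.reachable, hrx⟩
      have hxS : x ∉ S := fun h => (hsub x h).2 rfl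
      have hjS : y j' ∉ S := fun h => hreach (hsub (y j') h).1
      have hytS : y t ∈ S := Relation.ReflTransGen.refl
      have hftβ : VFree ct (y t) β := by
        intro w hw
        by_cases hwx : w = x
        · rw [hwx, hgt.1 (y t) x, hT1] at hw
          exact nomatch hw
        · rw [hT2 (y t) w (fun h => hxy t le_rfl h.symm) hwx] at hw
          exact hβfree w hw
      set c'' := vflip ct α β S with hc''
      have hg'' : VGood G k c'' := vflip_good hgt hgt.1 hSc hαβ hαk hβk
      have hft''α : VFree c'' (y t) α := vflip_free_mem hαβ hytS hftβ
      have hfx''α : VFree c'' x α := vflip_free_not_mem hgt hgt.1 hSc hxS (hT7a α hαfree)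
      set c' := vupd c'' x (y t) (some α) with hc'
      have hg' : VGood G k c' := vupd_good_some hg'' (hadjf t le_rfl) hαk hfx''α hft''α
      refine ⟨c', hg', ?_, ?_⟩
      · have hy0t : y₀ ≠ y t := by
          rw [← hy0]; exact hinj 0 t (by omega) le_rfl (by omega)
        rw [hc', vupd_other c'' x (y t) _ (by
          rintro (⟨-, h⟩ | ⟨h, -⟩); exact hy0t h; exact hxy t le_rfl h)]
        intro h
        have h2 : ct x y₀ = none := (vflip_none_iff x y₀).mp h
        rw [← hy0, hT4 0 (by omega)] at h2
        obtain ⟨b1, hb1, -⟩ := hfc 0 (by omega)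
        rw [hb1] at h2
        exact nomatch h2
      · intro u v hne
        by_cases hpair : (u = x ∧ v = y t) ∨ (u = y t ∧ v = x)
        · rcases hpair with ⟨rfl, rfl⟩ | ⟨rfl, rfl⟩
          · rw [hc', vupd_fst]; exact nofun
          · rw [hc', vupd_snd]; exact nofun
        · rw [hc', vupd_other c'' x (y t) _ hpair]
          have hct : ct u v ≠ none := by
            rcases hT5 u v hne with h | h
            · exact absurd h hpair
            · exact h
          intro h
          exact hct ((vflip_none_iff u v).mp h)
end Extend

section Total

lemma vizing_total (G : SimpleGraph V) [DecidableRel G.Adj] (k : ℕ)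
    (hdeg : ∀ v, G.degree v < k) :
    ∃ c : V → V → Option ℕ, VGood G k c ∧ ∀ u v, G.Adj u v → c u v ≠ none := by
  classical
  have main : ∀ n (c : V → V → Option ℕ), VGood G k c →
      ((Finset.univ : Finset (V × V)).filter
        (fun p => G.Adj p.1 p.2 ∧ c p.1 p.2 = none)).card ≤ n →
      ∃ c', VGood G k c' ∧ ∀ u v, G.Adj u v → c' u v ≠ none := by
    intro n
    induction n with
    | zero =>
      intro c hc hcard
      refine ⟨c, hc, fun u v hadj => ?_⟩
      intro hnone
      have hmem : (u, v) ∈ (Finset.univ : Finset (V × V)).filter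
          (fun p => G.Adj p.1 p.2 ∧ c p.1 p.2 = none) := by
        simp [hadj, hnone]
      have := Finset.card_pos.mpr ⟨_, hmem⟩
      omega
    | succ n ih =>
      intro c hc hcard
      by_cases hex : ∃ u v, G.Adj u v ∧ c u v = none
      · obtain ⟨u, v, huv, hnone⟩ := hex
        obtain ⟨c', hc', hne, hdom⟩ := vextend hdeg hc huv hnone
        apply ih c' hc'
        have hsub : (Finset.univ : Finset (V × V)).filter
              (fun p => G.Adj p.1 p.2 ∧ c' p.1 p.2 = none) ⊆
            (Finset.univ : Finset (V × V)).filter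
              (fun p => G.Adj p.1 p.2 ∧ c p.1 p.2 = none) := by
          intro p hp
          simp only [Finset.mem_filter, Finset.mem_univ, true_and] at hp ⊢
          refine ⟨hp.1, ?_⟩
          by_contra h
          exact hdom p.1 p.2 h hp.2
        have hss : (Finset.univ : Finset (V × V)).filter
              (fun p => G.Adj p.1 p.2 ∧ c' p.1 p.2 = none) ⊂
            (Finset.univ : Finset (V × V)).filter
              (fun p => G.Adj p.1 p.2 ∧ c p.1 p.2 = none) := by
          refine (Finset.ssubset_iff_of_subset hsub).mpr ⟨(u, v), ?_, ?_⟩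
          · simp [huv, hnone]
          · simp only [Finset.mem_filter, Finset.mem_univ, true_and, not_and]
            intro _
            exact hne
        have := Finset.card_lt_card hss
        omega
      · push_neg at hex
        exact ⟨c, hc, fun u v hadj h => hex u v hadj h⟩
  refine main ((Finset.univ : Finset (V × V)).card) (fun _ _ => none)
    ⟨fun _ _ => rfl, fun u v h => absurd rfl h, fun u v a h => (Option.some_ne_none a h.symm).elim,
      fun u v w hvw hne => absurd rfl hne⟩ (Finset.card_le_card (Finset.filter_subset _ _))

lemma vizing_exists (G : SimpleGraph V) [DecidableRel G.Adj] :
    ∃ φ : V → V → ℕ, (∀ u v, φ u v = φ v u) ∧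
      (∀ u v, G.Adj u v → φ u v < G.maxDegree + 1) ∧
      (∀ u v w, G.Adj u v → G.Adj u w → v ≠ w → φ u v ≠ φ u w) := by
  obtain ⟨c, ⟨hsym, hsupp, hbd, hprop⟩, htot⟩ := vizing_total G (G.maxDegree + 1)
      (fun v => Nat.lt_succ_of_le (SimpleGraph.degree_le_maxDegree G v))
  refine ⟨fun u v => (c u v).getD 0,
    fun u v => by show (c u v).getD 0 = (c v u).getD 0; rw [hsym], ?_, ?_⟩
  · intro u v hadj
    obtain ⟨a, ha⟩ := Option.ne_none_iff_exists'.mp (htot u v hadj)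
    show (c u v).getD 0 < G.maxDegree + 1
    rw [ha]
    exact hbd u v a ha
  · intro u v w hadj1 hadj2 hvw
    obtain ⟨a, ha⟩ := Option.ne_none_iff_exists'.mp (htot u v hadj1)
    obtain ⟨b, hb⟩ := Option.ne_none_iff_exists'.mp (htot u w hadj2)
    show (c u v).getD 0 ≠ (c u w).getD 0
    rw [ha, hb]
    simp only [Option.getD_some]
    intro h
    apply hprop u v w hvw (by simp [ha])
    rw [ha, hb, h]

end Total

end VizingAux

section Main

/-- For oriented graphs, proper edge-colourings of the underlying graph induce
nd-arc-colourings, and ndi(D) ≤ χ'(und D) ≤ Δ(und D)+1 ≤ 2Δ*(D)+2. -/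
theorem stmt4 {V : Type*} [Fintype V] [DecidableEq V] (A : V → V → Prop) [DecidableRel A]
    (hirr : Irreflexive A) (horiented : ∀ u v, A u v → ¬ A v u)
    (G : SimpleGraph V) [DecidableRel G.Adj]
    (hG : ∀ u v, G.Adj u v ↔ A u v ∨ A v u) :
    (∀ φ : V → V → ℕ, (∀ u v, φ u v = φ v u) →
      (∀ u v w, G.Adj u v → G.Adj u w → v ≠ w → φ u v ≠ φ u w) →
      ProperArc A φ ∧ NDArc A φ) ∧
    HasNDColoring A (G.maxDegree + 1) ∧
    G.maxDegree + 1 ≤ 2 * maxDeg A + 2 := by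
  classical
  have hpart1 : ∀ φ : V → V → ℕ, (∀ u v, φ u v = φ v u) →
      (∀ u v w, G.Adj u v → G.Adj u w → v ≠ w → φ u v ≠ φ u w) →
      ProperArc A φ ∧ NDArc A φ := by
    intro φ hsymm hproper
    constructor
    · constructor
      · intro u v w huv huw hvw
        exact hproper u v w ((hG u v).mpr (Or.inl huv)) ((hG u w).mpr (Or.inl huw)) hvw
      · intro u v w huv hwv huw
        have h := hproper v u w ((hG v u).mpr (Or.inr huv)) ((hG v w).mpr (Or.inr hwv)) huw
        rw [hsymm u v, hsymm w v]
        exact h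
    · intro u v hA
      unfold Distinguished
      intro heq
      have h1 : outColors A φ u = outColors A φ v := congrArg Prod.fst heq
      have hmem : φ u v ∈ outColors A φ u := ⟨v, hA, rfl⟩
      rw [h1] at hmem
      obtain ⟨w, hvw, hw⟩ := hmem
      have hwu : w ≠ u := by
        intro h
        rw [h] at hvw
        exact horiented u v hA hvw
      have h2 := hproper v w u ((hG v w).mpr (Or.inl hvw)) ((hG v u).mpr (Or.inr hA)) hwu
      apply h2
      rw [hw, hsymm u v]
  refine ⟨hpart1, ?_, ?_⟩
  · obtain ⟨φ, hsym, hbd, hprop⟩ := vizing_exists G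
    obtain ⟨hPA, hND⟩ := hpart1 φ hsym hprop
    exact ⟨φ, fun u v hA => hbd u v ((hG u v).mpr (Or.inl hA)), hPA, hND⟩
  · have h1 : G.maxDegree ≤ 2 * maxDeg A := by
      apply SimpleGraph.maxDegree_le_of_forall_degree_le
      intro v
      have hsubset : G.neighborFinset v ⊆
          (Finset.univ.filter fun w => A v w) ∪ (Finset.univ.filter fun w => A w v) := by
        intro w hw
        rw [SimpleGraph.mem_neighborFinset] at hw
        rcases (hG v w).mp hw with h | h
        · exact Finset.mem_union_left _ (by simp [h])
        · exact Finset.mem_union_right _ (by simp [h])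
      calc G.degree v = (G.neighborFinset v).card := rfl
        _ ≤ _ := Finset.card_le_card hsubset
        _ ≤ (Finset.univ.filter fun w => A v w).card +
              (Finset.univ.filter fun w => A w v).card := Finset.card_union_le _ _
        _ = outDeg A v + inDeg A v := rfl
        _ ≤ maxDeg A + maxDeg A := Nat.add_le_add
              (le_trans (Finset.le_sup (Finset.mem_univ v)) (le_max_left _ _))
              (le_trans (Finset.le_sup (Finset.mem_univ v)) (le_max_right _ _))
        _ = 2 * maxDeg A := by omega
    omega

end Main
end

section
/- If D is a digraph in which every vertex has indegree 1 and outdegree 1 (a disjoint union of directed cycles), and D has at least one arc, then ndi(D) = 2: there is a 2-colouring of the arcs, proper at every vertex, such that for every arc uv the ordered pairs (S^+(u),S^-(u)) and (S^+(v),S^-(v)) differ, and no such 1-colouring exists. -/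
open Finset

/-
Write `σ` for the successor permutation of the cycles. Every arc-colouring is proper, and the
colour sets at `u` are the singletons of the colours of the arcs `u → σ u` and `σ⁻¹ u → u`.
With one colour all vertices look alike. For two colours, colour each arc by whether its tail
lies in a set `T` containing no arc `u → σ u` and maximal with this property: then no three
consecutive vertices along a cycle agree on membership in `T`, which is exactly what makes
the neighbours `u` and `σ u` distinguishable.
-/

section SuccessorSet

variable {V : Type*} (f : V → V)

lemma exists_maximal_forall_map_notMem :
    ∃ T : Set V, Maximal (fun T : Set V => ∀ u ∈ T, f u ∉ T) T := by
  refine zorn_subset _ fun c hc hchain => ⟨⋃₀ c, ?_, fun s hs => Set.subset_sUnion_of_mem hs⟩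
  rintro u ⟨s, hs, hus⟩ ⟨t, ht, hft⟩
  rcases hchain.total hs ht with hst | hts
  · exact hc ht u (hst hus) hft
  · exact hc hs u hus (hts hft)

lemma exists_forall_map_notMem_and_dominating (hf : Function.Injective f)
    (hfix : ∀ u, f u ≠ u) :
    ∃ T : Set V, (∀ u ∈ T, f u ∉ T) ∧ ∀ u, u ∈ T ∨ f u ∈ T ∨ f (f u) ∈ T := by
  obtain ⟨T, hT⟩ := exists_maximal_forall_map_notMem f
  refine ⟨T, hT.1, fun u => ?_⟩
  by_contra! hgap
  obtain ⟨hu, hfu, hffu⟩ := hgap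
  have hinsert : ∀ x ∈ insert (f u) T, f x ∉ insert (f u) T := by
    rintro x (rfl | hx) (hfx | hfx)
    · exact hfix _ hfx
    · exact hffu hfx
    · exact hu (hf hfx ▸ hx)
    · exact hT.1 x hx hfx
  exact hfu (hT.2 hinsert (Set.subset_insert _ _) (Set.mem_insert _ _))

end SuccessorSet

lemma exists_perm_adj_iff {V : Type*} {A : V → V → Prop}
    (hout : ∀ u, ∃! v, A u v) (hin : ∀ u, ∃! v, A v u) :
    ∃ σ : Equiv.Perm V, ∀ u v, A u v ↔ σ u = v := by
  choose f hfA hf using hout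
  choose g hgA hg using hin
  refine ⟨⟨f, g, fun u => (hg _ u (hfA u)).symm, fun u => (hf _ u (hgA u)).symm⟩, fun u v => ?_⟩
  exact ⟨fun huv => (hf u v huv).symm, fun h => h ▸ hfA u⟩

namespace PermDigraph

variable {V : Type*} {A : V → V → Prop} {σ : Equiv.Perm V} (hσ : ∀ u v, A u v ↔ σ u = v)
include hσ

lemma properArc (γ : V → V → ℕ) : ProperArc A γ := by
  refine ⟨fun u v w huv huw hvw => ?_, fun u v w huv hwv huw => ?_⟩
  · exact absurd (((hσ u v).1 huv).symm.trans ((hσ u w).1 huw)) hvw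
  · exact absurd (σ.injective (((hσ u v).1 huv).trans ((hσ w v).1 hwv).symm)) huw

lemma outColors_eq (γ : V → V → ℕ) (u : V) : outColors A γ u = {γ u (σ u)} := by
  ext c
  simp only [outColors, hσ, Set.mem_ofPred_eq, Set.mem_singleton_iff, exists_eq_left']
  exact eq_comm

lemma inColors_eq (γ : V → V → ℕ) (u : V) : inColors A γ u = {γ (σ.symm u) u} := by
  ext c
  simp only [inColors, hσ, ← Equiv.eq_symm_apply, Set.mem_ofPred_eq, Set.mem_singleton_iff,
    exists_eq_left]
  exact eq_comm

lemma not_hasNDColoring_one (hne : ∃ u v, A u v) : ¬ HasNDColoring A 1 := by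
  rintro ⟨γ, hlt, -, hnd⟩
  obtain ⟨u, v, huv⟩ := hne
  have hzero : ∀ w, γ w (σ w) = 0 ∧ γ (σ.symm w) w = 0 := fun w =>
    ⟨Nat.lt_one_iff.mp (hlt _ _ ((hσ _ _).2 rfl)),
      Nat.lt_one_iff.mp (hlt _ _ ((hσ _ _).2 (σ.apply_symm_apply w)))⟩
  apply hnd u v huv
  simp only [outColors_eq hσ, inColors_eq hσ, (hzero u).1, (hzero u).2, (hzero v).1, (hzero v).2]

lemma hasNDColoring_two (hfix : ∀ u, σ u ≠ u) : HasNDColoring A 2 := by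
  classical
  obtain ⟨T, hTsparse, hTdom⟩ :=
    exists_forall_map_notMem_and_dominating σ σ.injective hfix
  have hcolor_eq : ∀ u v : V, ((if u ∈ T then 1 else 0 : ℕ) = if v ∈ T then 1 else 0) ↔
      (u ∈ T ↔ v ∈ T) := by
    intro u v
    split_ifs <;> simp_all
  refine ⟨fun u _ => if u ∈ T then 1 else 0, fun u _ _ => by dsimp only; split_ifs <;> omega,
    properArc hσ _, fun u v huv hpair => ?_⟩
  obtain rfl := (hσ u v).1 huv
  obtain ⟨w, rfl⟩ := σ.surjective u
  simp only [outColors_eq hσ, inColors_eq hσ, Prod.mk.injEq, Set.singleton_eq_singleton_iff,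
    hcolor_eq, Equiv.symm_apply_apply] at hpair
  -- now `w`, `σ w` and `σ (σ w)` all agree on membership in `T`
  have hw := hTsparse w
  have hσw := hTsparse (σ w)
  have hdom := hTdom w
  tauto

end PermDigraph

/-- A nonempty disjoint union of directed cycles has ndi = 2. -/
theorem stmt6 {V : Type*} (A : V → V → Prop) (hirr : Irreflexive A)
    (hout : ∀ u, ∃! v, A u v) (hin : ∀ u, ∃! v, A v u)
    (hne : ∃ u v, A u v) :
    HasNDColoring A 2 ∧ ¬ HasNDColoring A 1 := by
  obtain ⟨σ, hσ⟩ := exists_perm_adj_iff hout hin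
  have hfix : ∀ u, σ u ≠ u := fun u h => hirr u ((hσ u u).2 h)
  exact ⟨PermDigraph.hasNDColoring_two hσ hfix, PermDigraph.not_hasNDColoring_one hσ hne⟩
end

section
/- Every directed cycle of length n ≥ 2 admits a neighbour-distinguishing proper arc-colouring with 2 colours: if n is even colour the arcs alternately 1,2; if n is odd colour two consecutive arcs with colour 2 and alternate 1,2 on the rest. In both cases, for every arc uv the ordered pairs (S^+(u),S^-(u)) and (S^+(v),S^-(v)) differ. -/
open Finset

/-!
Colour every arc of the cycle by a colour attached to its tail. Then `S⁺(u) = {c u}` and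
`S⁻(u) = {c (u - 1)}`, so the arc `u → u + 1` fails to be distinguished exactly when
`c (u - 1) = c u = c (u + 1)`. It therefore suffices that no three consecutive vertices share a
colour, and in the alternating colouring (with the last vertex recoloured when `n` is odd) the
only pair of consecutive vertices that can share a colour is `n - 2, n - 1`.
-/

section SuccessorDigraph

variable {G : Type*}

theorem properArc_succ [Add G] [One G] [IsRightCancelAdd G] (γ : G → G → ℕ) :
    ProperArc (fun i j : G => j = i + 1) γ :=
  ⟨fun _ _ _ hv hw hne => absurd (hv.trans hw.symm) hne,
   fun _ _ _ hu hw hne => absurd (add_right_cancel (hu.symm.trans hw)) hne⟩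

theorem outColors_succ [Add G] [One G] (c : G → ℕ) (u : G) :
    outColors (fun i j : G => j = i + 1) (fun i _ => c i) u = {c u} := by
  ext
  simp [outColors, eq_comm]

theorem inColors_succ [AddGroupWithOne G] (c : G → ℕ) (u : G) :
    inColors (fun i j : G => j = i + 1) (fun i _ => c i) u = {c (u - 1)} := by
  ext x
  simp only [inColors, Set.mem_ofPred_eq, Set.mem_singleton_iff]
  constructor
  · rintro ⟨v, rfl, rfl⟩
    rw [add_sub_cancel_right]
  · rintro rfl
    exact ⟨u - 1, (sub_add_cancel u 1).symm, rfl⟩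

theorem ndArc_succ_of_not_three_eq [AddGroupWithOne G] (c : G → ℕ)
    (hc : ∀ u, c (u - 1) = c u → c u ≠ c (u + 1)) :
    NDArc (fun i j : G => j = i + 1) (fun i _ => c i) := by
  rintro u _ rfl h
  simp only [outColors_succ, inColors_succ, add_sub_cancel_right, Prod.mk.injEq,
    Set.singleton_eq_singleton_iff] at h
  exact hc u h.2 h.1

end SuccessorDigraph

section CycleColouring

/-- The paper's colours `1, 2` are `0, 1` here; for odd `n` the arcs leaving `n - 2` and `n - 1`
both get colour `1`. -/
def cycleColouring (n : ℕ) (u : ZMod n) : ℕ :=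
  if u.val + 1 = n then 1 else u.val % 2

variable {n : ℕ}

theorem cycleColouring_lt_two (u : ZMod n) : cycleColouring n u < 2 := by
  unfold cycleColouring
  split_ifs <;> omega

theorem val_add_two_eq_of_cycleColouring_eq (hn : 2 ≤ n) {u : ZMod n}
    (h : cycleColouring n u = cycleColouring n (u + 1)) : u.val + 2 = n := by
  have : NeZero n := ⟨by omega⟩
  have hsucc : (u + 1).val = (u.val + 1) % n := by
    rw [ZMod.val_add, ZMod.val_one'' (by omega)]
  have hlt := ZMod.val_lt u
  unfold cycleColouring at h
  rcases Nat.lt_or_ge (u.val + 1) n with hinner | hlast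
  · rw [Nat.mod_eq_of_lt hinner] at hsucc
    rw [hsucc] at h
    split_ifs at h <;> omega
  · rw [show u.val + 1 = n by omega, Nat.mod_self] at hsucc
    rw [hsucc] at h
    split_ifs at h <;> omega

theorem cycleColouring_not_three_eq (hn : 2 ≤ n) (u : ZMod n)
    (h : cycleColouring n (u - 1) = cycleColouring n u) :
    cycleColouring n u ≠ cycleColouring n (u + 1) := by
  intro h'
  have hprev := val_add_two_eq_of_cycleColouring_eq hn (u := u - 1) (by rwa [sub_add_cancel])
  have hcur := val_add_two_eq_of_cycleColouring_eq hn h'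
  have : Fact (1 < n) := ⟨by omega⟩
  have hself : u - 1 = u := ZMod.val_injective n (by omega)
  exact one_ne_zero (sub_eq_self.mp hself)

end CycleColouring

/-- Every directed cycle of length n ≥ 2 has an nd-arc-colouring with 2 colours. -/
theorem stmt7 (n : ℕ) (hn : 2 ≤ n) :
    HasNDColoring (fun i j : ZMod n => j = i + 1) 2 :=
  ⟨fun i _ => cycleColouring n i, fun i _ _ => cycleColouring_lt_two i, properArc_succ _,
    ndArc_succ_of_not_three_eq _ (cycleColouring_not_three_eq hn)⟩
end

section
/- For every digraph D, ndi(D) ≤ 2Δ*(D), i.e., D admits a neighbour-distinguishing proper arc-colouring using at most 2·max{Δ^+(D), Δ^-(D)} colours. -/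
open Finset

/-!
By König's theorem the arcs can be properly coloured with `Δ*` colours: pad the bipartite graph
of tails and heads to a `Δ*`-regular multigraph and peel off `Δ*` perfect matchings with Hall's
theorem. Each colour class is a disjoint union of directed paths and cycles, so its vertices can
be 2-coloured with no monochromatic path `t → u → v`: in a 2-colouring with fewest monochromatic
arcs, recolouring the middle vertex of such a path would make both of its arcs bichromatic.
Splitting colour `i` into `2i` and `2i + 1` according to the colour of the tail gives `2Δ*`
colours. If an arc `uv` joined vertices with equal colour sets, its colour would also leave `v`
and enter `u`, producing a monochromatic path `t → u → v` in one colour class.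
-/

namespace Matrix

variable {n : Type*} [Fintype n] [DecidableEq n]

theorem exists_perm_pos_of_sum_eq {M : Matrix n n ℕ} {d : ℕ} (hd : 0 < d)
    (hrow : ∀ i, ∑ j, M i j = d) (hcol : ∀ j, ∑ i, M i j = d) :
    ∃ σ : Equiv.Perm n, ∀ i, 0 < M i (σ i) := by
  let support (i : n) : Finset n := {j | 0 < M i j}
  have hall (s : Finset n) : #s ≤ #(s.biUnion support) := by
    refine Nat.le_of_mul_le_mul_left ?_ hd
    calc d * #s = ∑ i ∈ s, ∑ j, M i j := by simp [hrow, mul_comm]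
      _ = ∑ i ∈ s, ∑ j ∈ s.biUnion support, M i j := by
          refine sum_congr rfl fun i hi => (sum_subset (subset_univ _) fun j _ hj => ?_).symm
          by_contra hij
          exact hj (mem_biUnion.2 ⟨i, hi, by simpa [support, Nat.pos_iff_ne_zero] using hij⟩)
      _ ≤ ∑ i, ∑ j ∈ s.biUnion support, M i j :=
          sum_le_sum_of_subset_of_nonneg (subset_univ _) fun _ _ _ => Nat.zero_le _
      _ = ∑ j ∈ s.biUnion support, ∑ i, M i j := sum_comm
      _ = d * #(s.biUnion support) := by simp [hcol, mul_comm]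
  obtain ⟨f, hf, hf_mem⟩ := (all_card_le_biUnion_card_iff_exists_injective support).1 hall
  exact ⟨Equiv.ofBijective f (Finite.injective_iff_bijective.1 hf), fun i => by
    simpa [support] using hf_mem i⟩

theorem exists_perms_cover_of_sum_eq (d : ℕ) (M : Matrix n n ℕ)
    (hrow : ∀ i, ∑ j, M i j = d) (hcol : ∀ j, ∑ i, M i j = d) :
    ∃ σ : Fin d → Equiv.Perm n, ∀ i j, 0 < M i j → ∃ k, σ k i = j := by
  induction d generalizing M with
  | zero =>
    refine ⟨Fin.elim0, fun i j hij => ?_⟩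
    have := (sum_eq_zero_iff.1 (hrow i)) j (mem_univ j)
    omega
  | succ d ih =>
    obtain ⟨σ, hσ⟩ := exists_perm_pos_of_sum_eq d.succ_pos hrow hcol
    have hle (i j : n) : σ.permMatrix ℕ i j ≤ M i j := by
      by_cases h : σ i = j
      · subst h
        simpa [Equiv.Perm.permMatrix, Nat.one_le_iff_ne_zero, ← Nat.pos_iff_ne_zero] using hσ i
      · simp [Equiv.Perm.permMatrix, h]
    have hP := permMatrix_mem_doublyStochastic (R := ℕ) (σ := σ)
    obtain ⟨τ, hτ⟩ := ih (M - σ.permMatrix ℕ)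
      (fun i => by
        rw [← Nat.add_sub_cancel d 1, ← hrow i, ← sum_row_of_mem_doublyStochastic hP i,
          ← sum_tsub_distrib _ fun j _ => hle i j]; rfl)
      (fun j => by
        rw [← Nat.add_sub_cancel d 1, ← hcol j, ← sum_col_of_mem_doublyStochastic hP j,
          ← sum_tsub_distrib _ fun i _ => hle i j]; rfl)
    refine ⟨Fin.cons σ τ, fun i j hij => ?_⟩
    by_cases h : σ i = j
    · exact ⟨0, h⟩
    · obtain ⟨k, hk⟩ := hτ i j (by simpa [Equiv.Perm.permMatrix, h] using hij)
      exact ⟨k.succ, hk⟩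

end Matrix

section Digraph

variable {V : Type*}

theorem HasProperColoring.of_perms_cover {n : Type*} {A : V → V → Prop} {k : ℕ}
    (σ : Fin k → Equiv.Perm n) {e : V → n} (he : Function.Injective e)
    (hcover : ∀ u v, A u v → ∃ i, σ i (e u) = e v) : HasProperColoring A k := by
  classical
  choose κ hκ using hcover
  refine ⟨fun u v => if h : A u v then κ u v h else 0, fun u v huv => by simp [huv],
    fun u v w huv huw hvw hc => hvw (he ?_), fun u v w huv hwv huw hc => huw (he ?_)⟩
  · simp only [huv, huw, dite_true, Fin.val_inj] at hc
    rw [← hκ u v huv, ← hκ u w huw, hc]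
  · simp only [huv, hwv, dite_true, Fin.val_inj] at hc
    apply (σ (κ u v huv)).injective
    rw [hκ u v huv, hc, hκ w v hwv]

variable [Fintype V] (A : V → V → Prop) [DecidableRel A]

theorem outDeg_le_maxDeg (u : V) : outDeg A u ≤ maxDeg A :=
  (le_sup (mem_univ u)).trans (le_max_left _ _)

theorem inDeg_le_maxDeg (v : V) : inDeg A v ≤ maxDeg A :=
  (le_sup (mem_univ v)).trans (le_max_right _ _)

/-- König's edge-colouring theorem for the bipartite graph of tails and heads. -/
theorem hasProperColoring_maxDeg : HasProperColoring A (maxDeg A) := by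
  classical
  set D := maxDeg A
  let adj : Matrix V V ℕ := fun u v => if A u v then 1 else 0
  -- a `D`-regular bipartite multigraph containing `adj`: the deficient vertices of `adj` and of
  -- its transpose are matched up by parallel edges
  let M : Matrix (V ⊕ V) (V ⊕ V) ℕ := Matrix.fromBlocks adj
    (Matrix.diagonal fun u => D - outDeg A u) (Matrix.diagonal fun v => D - inDeg A v) adj.transpose
  have hout (u : V) : ∑ v, adj u v = outDeg A u := (card_filter _ _).symm
  have hin (v : V) : ∑ u, adj u v = inDeg A v := (card_filter _ _).symm
  have hrow (i : V ⊕ V) : ∑ j, M i j = D := by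
    rcases i with u | v
    · simp [M, Fintype.sum_sum_type, Matrix.diagonal_apply, hout, outDeg_le_maxDeg, D]
    · simp [M, Fintype.sum_sum_type, Matrix.diagonal_apply, hin, inDeg_le_maxDeg, D]
  have hcol (j : V ⊕ V) : ∑ i, M i j = D := by
    rcases j with v | u
    · simp [M, Fintype.sum_sum_type, Matrix.diagonal_apply, hin, inDeg_le_maxDeg, D]
    · simp [M, Fintype.sum_sum_type, Matrix.diagonal_apply, hout, outDeg_le_maxDeg, D]
  obtain ⟨σ, hσ⟩ := Matrix.exists_perms_cover_of_sum_eq D M hrow hcol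
  exact .of_perms_cover σ Sum.inl_injective fun u v huv =>
    hσ _ _ (show 0 < adj u v by simp [adj, huv])

end Digraph

theorem Nat.bit_eq_bit_iff {a b : Bool} {m n : ℕ} :
    Nat.bit a m = Nat.bit b n ↔ a = b ∧ m = n := by
  cases a <;> cases b <;> simp only [Nat.bit_val] <;> simp <;> omega

theorem exists_bool_no_monochromatic_two_path {V : Type*} [Fintype V] {R : V → V → Prop}
    (hirr : ∀ u, ¬R u u)
    (hout : ∀ u v w, R u v → R u w → v = w) (hin : ∀ u v w, R u w → R v w → u = v) :
    ∃ g : V → Bool, ∀ t u v, R t u → R u v → ¬(g t = g u ∧ g u = g v) := by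
  classical
  have hne {x y : V} (h : R x y) : x ≠ y := fun e => hirr y (e ▸ h)
  let mono (g : V → Bool) : Finset (V × V) := {p | R p.1 p.2 ∧ g p.1 = g p.2}
  obtain ⟨g, hg⟩ := Finite.exists_min fun g => #(mono g)
  refine ⟨g, fun t u v htu huv ⟨hgtu, hguv⟩ => ?_⟩
  let g' := Function.update g u (!g u)
  have hsub : mono g' ⊆ mono g := by
    rintro ⟨x, y⟩ hxy
    simp only [mono, mem_filter, mem_univ, true_and] at hxy ⊢
    refine ⟨hxy.1, ?_⟩
    by_cases hx : x = u
    · subst hx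
      obtain rfl := hout _ _ _ hxy.1 huv
      simp [g', (hne huv).symm, ← hguv] at hxy
    by_cases hy : y = u
    · subst hy
      obtain rfl := hin _ _ _ hxy.1 htu
      simp [g', hx, hgtu] at hxy
    simpa [g', hx, hy] using hxy.2
  have hssub : mono g' ⊂ mono g :=
    (ssubset_iff_of_subset hsub).2 ⟨(t, u), by simp [mono, htu, hgtu], by
      simp [mono, g', hne htu, hgtu]⟩
  exact (card_lt_card hssub).not_ge (hg g')

theorem HasProperColoring.hasNDColoring_two_mul {V : Type*} [Fintype V] {A : V → V → Prop}
    {k : ℕ} (hirr : ∀ u, ¬A u u) (hA : HasProperColoring A k) : HasNDColoring A (2 * k) := by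
  obtain ⟨c, hck, hc_out, hc_in⟩ := hA
  have hbits (i : ℕ) : ∃ g : V → Bool, ∀ t u v, A t u ∧ c t u = i → A u v ∧ c u v = i →
      ¬(g t = g u ∧ g u = g v) :=
    exists_bool_no_monochromatic_two_path (fun u h => hirr u h.1)
      (fun u v w h₁ h₂ => by_contra fun hvw =>
        hc_out u v w h₁.1 h₂.1 hvw (h₁.2.trans h₂.2.symm))
      (fun u v w h₁ h₂ => by_contra fun huv =>
        hc_in u w v h₁.1 h₂.1 huv (h₁.2.trans h₂.2.symm))
  choose g hg using hbits
  let γ u v := Nat.bit (g (c u v) u) (c u v)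
  have hγ {u v u' v'} (h : γ u v = γ u' v') :
      c u v = c u' v' ∧ g (c u v) u = g (c u' v') u' :=
    (Nat.bit_eq_bit_iff.1 h).symm
  refine ⟨γ, fun u v huv => ?_, ⟨fun u v w huv huw hvw h => hc_out u v w huv huw hvw (hγ h).1,
    fun u v w huv hwv huw h => hc_in u v w huv hwv huw (hγ h).1⟩, fun u v huv h => ?_⟩
  · have := hck u v huv
    have := (g (c u v) u).toNat_le
    simp only [γ, Nat.bit_val]
    omega
  · obtain ⟨hout, hin⟩ := Prod.mk.inj h
    obtain ⟨w, hvw, hw⟩ : γ u v ∈ outColors A γ v := hout ▸ ⟨v, huv, rfl⟩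
    obtain ⟨t, htu, ht⟩ : γ u v ∈ inColors A γ u := hin ▸ ⟨u, huv, rfl⟩
    obtain ⟨hcw, hgw⟩ := hγ hw
    obtain ⟨hct, hgt⟩ := hγ ht
    rw [hcw] at hgw
    rw [hct] at hgt
    exact hg _ t u v ⟨htu, hct⟩ ⟨huv, rfl⟩ ⟨hgt, hgw.symm⟩

/-- For every digraph D, ndi(D) ≤ 2Δ*(D). -/
theorem stmt8 {V : Type*} [Fintype V] (A : V → V → Prop) [DecidableRel A]
    (hirr : Irreflexive A) :
    HasNDColoring A (2 * maxDeg A) :=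
  (hasProperColoring_maxDeg A).hasNDColoring_two_mul hirr
end

section
/- For every integer n ≥ 2, the neighbour-distinguishing index of the complete symmetric digraph K_n* equals n, i.e., ndi(K_n*) = Δ*(K_n*) + 1 = n. -/
open Finset

/-!
With `k ≤ n - 1` colours, a proper colouring of `K_n*` uses every colour at every vertex in both
directions, so no two vertices are distinguished. Conversely, if `M` is an idempotent Latin square
of order `n`, colouring the arc `uv` by `M u v` makes the out-colour set of `u` everything except
`u`. For odd `n` take `M a b = (a + b) / 2` over `ZMod n`; for even `n ≥ 4` prolong the square of
order `n - 1` along its transversal `(i, i + 1)`; for `n = 2` colour `uv` by `v`.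
-/

open Function

section LatinSquare

variable {α β : Type*}

structure IsIdempotentLatinSquare (M : α → α → α) : Prop where
  diag : ∀ i, M i i = i
  row_injective : ∀ i, Injective (M i)
  col_injective : ∀ j, Injective (M · j)

theorem IsIdempotentLatinSquare.map {M : α → α → α} (hM : IsIdempotentLatinSquare M)
    (e : α ≃ β) :
    IsIdempotentLatinSquare fun x y => e (M (e.symm x) (e.symm y)) where
  diag x := by simp [hM.diag]
  row_injective x := e.injective.comp ((hM.row_injective _).comp e.symm.injective)
  col_injective y := e.injective.comp ((hM.col_injective _).comp e.symm.injective)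

theorem isIdempotentLatinSquare_midpoint (R : Type*) {V P : Type*} [Ring R] [Invertible (2 : R)]
    [AddCommGroup V] [Module R V] [AddTorsor V P] :
    IsIdempotentLatinSquare (midpoint R : P → P → P) where
  diag := midpoint_self R
  row_injective x y y' h := (midpoint_eq_iff.mp h).symm.trans (midpoint_eq_iff.mp rfl)
  col_injective y x x' h := by
    dsimp only at h
    rw [midpoint_comm x, midpoint_comm x'] at h
    exact (midpoint_eq_iff.mp h).symm.trans (midpoint_eq_iff.mp rfl)

theorem injective_midpoint_add_one (R : Type*) [CommRing R] [Invertible (2 : R)] :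
    Injective fun a : R => midpoint R a (a + 1) := by
  have hmid : ∀ a : R, midpoint R a (a + 1) = a + ⅟2 := fun a => by
    rw [midpoint_eq_smul_add, smul_eq_mul]
    linear_combination a * invOf_mul_self (2 : R)
  intro a b h
  simpa [hmid] using h

/-- The new symbol `none` takes over the transversal cells `(i, σ i)`, whose entries move to the
new row and column. -/
def prolong [DecidableEq α] (M : α → α → α) (σ : Equiv.Perm α) :
    Option α → Option α → Option α
  | some i, some j => if j = σ i then none else some (M i j)
  | some i, none => some (M i (σ i))
  | none, some j => some (M (σ.symm j) j)
  | none, none => none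

theorem IsIdempotentLatinSquare.prolong [DecidableEq α] {M : α → α → α}
    (hM : IsIdempotentLatinSquare M) {σ : Equiv.Perm α} (hσ : ∀ i, σ i ≠ i)
    (htrans : Injective fun i => M i (σ i)) : IsIdempotentLatinSquare (prolong M σ) where
  diag := by
    rintro (_ | i)
    · rfl
    · simp [_root_.prolong, (hσ i).symm, hM.diag]
  row_injective := by
    rintro (_ | i) (_ | j) (_ | j') h <;>
      simp only [_root_.prolong, Option.ite_none_left_eq_some, Option.some_eq_ite_none_left,
        Option.some.injEq, reduceCtorEq] at h ⊢
    case none.some.some =>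
      simpa using htrans (a₁ := σ.symm j) (a₂ := σ.symm j') (by simpa using h)
    case some.none.some => exact h.1 (hM.row_injective i h.2).symm
    case some.some.none => exact h.1 (hM.row_injective i h.2)
    case some.some.some => split_ifs at h with h1 h2 <;> simp_all [(hM.row_injective i).eq_iff]
  col_injective := by
    rintro (_ | j) (_ | i) (_ | i') h <;>
      simp only [_root_.prolong, Option.ite_none_left_eq_some, Option.some_eq_ite_none_left,
        Option.some.injEq, reduceCtorEq] at h ⊢
    case none.some.some => exact htrans h
    case some.none.some => exact h.1 (by simp [← hM.col_injective j h.2])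
    case some.some.none => exact h.1 (by simp [hM.col_injective j h.2])
    case some.some.some => split_ifs at h with h1 h2 <;> simp_all [(hM.col_injective j).eq_iff]

theorem exists_isIdempotentLatinSquare_zmod {m : ℕ} (hm : Odd m) :
    ∃ M : ZMod m → ZMod m → ZMod m,
      IsIdempotentLatinSquare M ∧ Injective fun a => M a (a + 1) := by
  have h2 : IsUnit (2 : ZMod m) := by
    simpa using (ZMod.isUnit_iff_coprime 2 m).mpr (Nat.coprime_two_left.mpr hm)
  let := h2.invertible
  exact ⟨midpoint (ZMod m), isIdempotentLatinSquare_midpoint _, injective_midpoint_add_one _⟩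

theorem exists_isIdempotentLatinSquare_fin {n : ℕ} (hn : n ≠ 2) :
    ∃ M : Fin n → Fin n → Fin n, IsIdempotentLatinSquare M := by
  rcases n.even_or_odd with heven | hodd
  · obtain rfl | hpos := Nat.eq_zero_or_pos n
    · exact ⟨fun i => i.elim0, fun i => i.elim0, fun i => i.elim0, fun i => i.elim0⟩
    obtain ⟨q, rfl⟩ : ∃ q, n = q + 1 := ⟨n - 1, by omega⟩
    have hq : Odd q := Nat.not_even_iff_odd.mp (Nat.even_add_one.mp heven)
    have : Fact (1 < q) := ⟨by have := hq.pos; omega⟩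
    obtain ⟨M, hM, htrans⟩ := exists_isIdempotentLatinSquare_zmod hq
    have hσ : ∀ a : ZMod q, Equiv.addRight 1 a ≠ a := by simp
    exact ⟨_, (hM.prolong hσ htrans).map
      ((Equiv.optionCongr (ZMod.finEquiv q).symm.toEquiv).trans (finSuccEquiv q).symm)⟩
  · have : NeZero n := ⟨hodd.pos.ne'⟩
    obtain ⟨M, hM, -⟩ := exists_isIdempotentLatinSquare_zmod hodd
    exact ⟨_, hM.map (ZMod.finEquiv n).symm.toEquiv⟩

end LatinSquare

section Colouring

variable {V : Type*} {A : V → V → Prop} {γ : V → V → ℕ} {k : ℕ}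

theorem outDeg_ne [Fintype V] [DecidableEq V] (u : V) :
    outDeg (fun u v : V => u ≠ v) u = Fintype.card V - 1 := by
  rw [outDeg, filter_ne, card_erase_of_mem (mem_univ u), card_univ]

theorem inDeg_ne [Fintype V] [DecidableEq V] (u : V) :
    inDeg (fun u v : V => u ≠ v) u = Fintype.card V - 1 := by
  rw [inDeg, filter_ne', card_erase_of_mem (mem_univ u), card_univ]

theorem maxDeg_ne [Fintype V] [DecidableEq V] [Nonempty V] :
    maxDeg (fun u v : V => u ≠ v) = Fintype.card V - 1 := by
  rw [maxDeg, funext outDeg_ne, funext inDeg_ne, sup_const univ_nonempty, max_self]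

theorem ProperArc.swap (hγ : ProperArc A γ) :
    ProperArc (Function.swap A) (Function.swap γ) :=
  ⟨fun u v w huv huw hvw => hγ.2 v u w huv huw hvw,
    fun u v w huv hwv huw => hγ.1 v u w huv hwv huw⟩

theorem outColors_eq_Iio [Fintype V] [DecidableRel A]
    (hk : ∀ u v, A u v → γ u v < k) (hγ : ProperArc A γ) {u : V} (hu : k ≤ outDeg A u) :
    outColors A γ u = Set.Iio k := by
  have himage : (univ.filter (A u ·)).image (γ u) = range k := by
    refine eq_of_subset_of_card_le (fun c hc => ?_) ?_
    · obtain ⟨v, hv, rfl⟩ := mem_image.mp hc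
      exact mem_range.mpr (hk u v (mem_filter.mp hv).2)
    · rw [card_range, card_image_of_injOn fun v hv w hw hvw => by_contra fun hne =>
        hγ.1 u v w (mem_filter.mp hv).2 (mem_filter.mp hw).2 hne hvw]
      exact hu
  rw [← coe_range, ← himage]
  ext c
  simp [outColors]

theorem inColors_eq_Iio [Fintype V] [DecidableRel A]
    (hk : ∀ u v, A u v → γ u v < k) (hγ : ProperArc A γ) {u : V} (hu : k ≤ inDeg A u) :
    inColors A γ u = Set.Iio k :=
  outColors_eq_Iio (A := Function.swap A) (fun u v huv => hk v u huv) hγ.swap hu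

theorem not_hasNDColoring_of_le_deg [Fintype V] [DecidableRel A]
    {u v : V} (huv : A u v) (hdeg : ∀ w, k ≤ outDeg A w ∧ k ≤ inDeg A w) :
    ¬ HasNDColoring A k := by
  rintro ⟨γ, hk, hγ, hnd⟩
  apply hnd u v huv
  simp only [outColors_eq_Iio hk hγ (hdeg _).1, inColors_eq_Iio hk hγ (hdeg _).2]

theorem hasNDColoring_ne_of_idempotent_rows {n : ℕ} (M : Fin n → Fin n → Fin n)
    (hdiag : ∀ i, M i i = i) (hrow : ∀ i, Injective (M i))
    (hcol : ∀ j, Set.InjOn (M · j) {j}ᶜ) : HasNDColoring (fun u v : Fin n => u ≠ v) n := by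
  refine ⟨fun u v => M u v, fun u v _ => (M u v).isLt, ⟨?_, ?_⟩, ?_⟩
  · intro u v w _ _ hvw h
    exact hvw (hrow u (Fin.ext h))
  · intro u v w hu hw huw h
    exact huw (hcol v hu hw (Fin.ext h))
  · intro u v huv hsame
    -- the colour `u` is missing at `u` but present at `v`
    have hu : (u : ℕ) ∉
        outColors (fun u v : Fin n => u ≠ v) (fun u v => (M u v : ℕ)) u := by
      rintro ⟨w, huw, hw⟩
      exact huw (hrow u (Fin.ext (hw.trans (congrArg Fin.val (hdiag u)).symm))).symm
    obtain ⟨w, hw⟩ := Finite.injective_iff_surjective.mp (hrow v) u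
    apply hu
    rw [(Prod.mk.inj hsame).1]
    refine ⟨w, ?_, congrArg Fin.val hw⟩
    rintro rfl
    exact huv (hw.symm.trans (hdiag v))

end Colouring

/-- ndi(K_n*) = Δ*(K_n*) + 1 = n for n ≥ 2. -/
theorem stmt10 (n : ℕ) (hn : 2 ≤ n) :
    HasNDColoring (fun u v : Fin n => u ≠ v) n ∧
    (∀ k, HasNDColoring (fun u v : Fin n => u ≠ v) k → n ≤ k) ∧
    maxDeg (fun u v : Fin n => u ≠ v) + 1 = n := by
  have : Nonempty (Fin n) := ⟨⟨0, by omega⟩⟩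
  refine ⟨?_, fun k hk => ?_, by rw [maxDeg_ne, Fintype.card_fin]; omega⟩
  · obtain rfl | hn2 := eq_or_ne n 2
    · refine hasNDColoring_ne_of_idempotent_rows (fun _ j => j) (fun _ => rfl)
        (fun _ => injective_id) fun j a ha b hb _ => ?_
      simp only [Set.mem_compl_singleton_iff, ne_eq, Fin.ext_iff] at ha hb ⊢
      omega
    · obtain ⟨M, hM⟩ := exists_isIdempotentLatinSquare_fin hn2
      exact hasNDColoring_ne_of_idempotent_rows M hM.diag hM.row_injective
        fun j => (hM.col_injective j).injOn
  · by_contra! hlt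
    refine not_hasNDColoring_of_le_deg (u := ⟨0, by omega⟩) (v := ⟨1, by omega⟩)
      (by simp [Fin.ext_iff]) (fun w => ?_) hk
    rw [outDeg_ne, inDeg_ne, Fintype.card_fin]
    omega
end

section
/- For odd n ≥ 3, the complete symmetric digraph K_n* admits a neighbour-distinguishing proper arc-colouring with n colours obtained from a partition of the edges of K_n into n maximal matchings M_0, ..., M_{n-1}, where M_i misses exactly the vertex v_i: colour both arcs between v_i and v_j with k when v_i v_j ∈ M_k. For each vertex v_i, colour i is the unique colour missing from S^+(v_i) ∪ S^-(v_i), hence the colouring is neighbour-distinguishing. -/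
/-! Colour `i` is absent from the out-colours of `v_i` (no edge of `M_i` meets `v_i`) but present
at every other vertex `v_j` (on its `M_i`-edge), so out-colour sets alone separate adjacent vertices.
Properness is just that each `M_k` is a matching, read off at tails and, by symmetry, at heads. -/

open Finset

variable {V : Type*} {A : V → V → Prop} {γ : V → V → ℕ}

theorem properArc_ne_of_symm (hsymm : ∀ u v, γ u v = γ v u)
    (hinj : ∀ u v w, v ≠ u → w ≠ u → v ≠ w → γ u v ≠ γ u w) :
    ProperArc (fun u v : V => u ≠ v) γ := by
  refine ⟨fun u v w huv huw hvw => hinj u v w huv.symm huw.symm hvw, ?_⟩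
  intro u v w huv hwv huw
  rw [hsymm u v, hsymm w v]
  exact hinj v u w huv hwv huw

theorem ndArc_of_missingColor (m : V → ℕ) (hmissing : ∀ u, m u ∉ outColors A γ u)
    (hpresent : ∀ u v, A u v → m u ∈ outColors A γ v) :
    NDArc A γ := by
  intro u v huv hsame
  obtain ⟨hout, -⟩ := Prod.mk.inj hsame
  exact hmissing u (hout ▸ hpresent u v huv)

theorem stmt11_general (n : ℕ)
    (φ : Fin n → Fin n → ℕ)
    (hsym : ∀ i j, φ i j = φ j i)
    (hmatch : ∀ i j j' : Fin n, j ≠ i → j' ≠ i → j ≠ j' → φ i j ≠ φ i j')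
    (hmiss : ∀ (i : Fin n) (c : ℕ), c < n → ((∃ j, j ≠ i ∧ φ i j = c) ↔ c ≠ i.val)) :
    ProperArc (fun u v : Fin n => u ≠ v) φ ∧ NDArc (fun u v : Fin n => u ≠ v) φ := by
  refine ⟨properArc_ne_of_symm hsym hmatch, ndArc_of_missingColor Fin.val ?_ ?_⟩
  · rintro i ⟨j, hij, hj⟩
    exact (hmiss i i.val i.isLt).mp ⟨j, hij.symm, hj⟩ rfl
  · intro i k hik
    obtain ⟨j, hjk, hj⟩ := (hmiss k i.val i.isLt).mpr (Fin.val_ne_of_ne hik)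
    exact ⟨j, hjk.symm, hj⟩

/-- For odd n ≥ 3, the colouring of K_n* induced by a partition of E(K_n) into
n maximal matchings (M_i missing exactly v_i) is neighbour-distinguishing. -/
theorem stmt11 (n : ℕ) (hn : 3 ≤ n) (hodd : Odd n)
    (φ : Fin n → Fin n → ℕ)
    (hsym : ∀ i j, φ i j = φ j i)
    (hlt : ∀ i j, i ≠ j → φ i j < n)
    (hmatch : ∀ i j j' : Fin n, j ≠ i → j' ≠ i → j ≠ j' → φ i j ≠ φ i j')
    (hmiss : ∀ (i : Fin n) (c : ℕ), c < n → ((∃ j, j ≠ i ∧ φ i j = c) ↔ c ≠ i.val)) :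
    ProperArc (fun u v : Fin n => u ≠ v) φ ∧ NDArc (fun u v : Fin n => u ≠ v) φ :=
  stmt11_general n φ hsym hmatch hmiss
end

section
/- If D is a digraph whose underlying graph has chromatic number k ≥ 3, then ndi(D) ≤ Δ*(D) + 2⌈log₂ k⌉. -/
open Finset

section AuxND

variable {V : Type*} [Fintype V]

private lemma transportND (N : ℕ) : ∀ (r s : V → ℕ), (∑ u, r u) = N → (∑ v, s v) = N →
    ∃ E : V → V → ℕ, (∀ u, ∑ v, E u v = r u) ∧ (∀ v, ∑ u, E u v = s v) := by
  induction N with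
  | zero =>
    intro r s hr hs
    refine ⟨fun _ _ => 0, fun u => ?_, fun v => ?_⟩
    · simp only [Finset.sum_const_zero]
      exact (Finset.sum_eq_zero_iff.mp hr u (mem_univ u)).symm
    · simp only [Finset.sum_const_zero]
      exact (Finset.sum_eq_zero_iff.mp hs v (mem_univ v)).symm
  | succ N ih =>
    intro r s hr hs
    classical
    have hru : ∃ u₀, r u₀ ≠ 0 := by
      by_contra h
      push_neg at h
      rw [Finset.sum_eq_zero (fun u _ => h u)] at hr
      omega
    obtain ⟨u₀, hu₀⟩ := hru
    have hsv : ∃ v₀, s v₀ ≠ 0 := by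
      by_contra h
      push_neg at h
      rw [Finset.sum_eq_zero (fun v _ => h v)] at hs
      omega
    obtain ⟨v₀, hv₀⟩ := hsv
    have hrsplit : ∑ u, r u = r u₀ + ∑ x ∈ univ \ {u₀}, r x := by
      have h := Finset.sum_update_of_mem (mem_univ u₀) (f := r) (b := r u₀)
      rwa [Function.update_eq_self] at h
    have hssplit : ∑ v, s v = s v₀ + ∑ x ∈ univ \ {v₀}, s x := by
      have h := Finset.sum_update_of_mem (mem_univ v₀) (f := s) (b := s v₀)
      rwa [Function.update_eq_self] at h
    have hr' : ∑ u, Function.update r u₀ (r u₀ - 1) u = N := by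
      rw [Finset.sum_update_of_mem (mem_univ u₀)]
      omega
    have hs' : ∑ v, Function.update s v₀ (s v₀ - 1) v = N := by
      rw [Finset.sum_update_of_mem (mem_univ v₀)]
      omega
    obtain ⟨E', hE'row, hE'col⟩ := ih _ _ hr' hs'
    refine ⟨fun u v => E' u v + if u = u₀ ∧ v = v₀ then 1 else 0, fun u => ?_, fun v => ?_⟩
    · rw [Finset.sum_add_distrib, hE'row u]
      by_cases h : u = u₀
      · have h2 : ∑ v, (if u = u₀ ∧ v = v₀ then (1:ℕ) else 0) = 1 := by
          simp only [h, true_and]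
          exact Fintype.sum_ite_eq' v₀ (fun _ => 1)
        rw [h2, h, Function.update_self]
        omega
      · have h2 : ∑ v, (if u = u₀ ∧ v = v₀ then (1:ℕ) else 0) = 0 := by
          apply Finset.sum_eq_zero
          intro v _
          simp [h]
        rw [h2, Function.update_of_ne h]
        omega
    · rw [Finset.sum_add_distrib, hE'col v]
      by_cases h : v = v₀
      · have h2 : ∑ u, (if u = u₀ ∧ v = v₀ then (1:ℕ) else 0) = 1 := by
          simp only [h, and_true]
          exact Fintype.sum_ite_eq' u₀ (fun _ => 1)
        rw [h2, h, Function.update_self]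
        omega
      · have h2 : ∑ u, (if u = u₀ ∧ v = v₀ then (1:ℕ) else 0) = 0 := by
          apply Finset.sum_eq_zero
          intro u _
          simp [h]
        rw [h2, Function.update_of_ne h]
        omega



private lemma decomposeND (n : ℕ) : ∀ (M : V → V → ℕ),
    (∀ u, ∑ v, M u v = n) → (∀ v, ∑ u, M u v = n) →
    ∃ f : ℕ → V → V, (∀ c, c < n → Function.Injective (f c)) ∧
      (∀ u v, 0 < M u v → ∃ c, c < n ∧ f c u = v) := by
  induction n with
  | zero =>
    intro M hrow _
    refine ⟨fun _ => id, fun c hc => absurd hc (Nat.not_lt_zero c), fun u v hM => ?_⟩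
    exfalso
    have := Finset.sum_eq_zero_iff.mp (hrow u) v (mem_univ v)
    omega
  | succ n ih =>
    intro M hrow hcol
    classical
    have hM0 : ∀ u v, v ∉ univ.filter (fun v => 0 < M u v) → M u v = 0 := by
      intro u v hv
      simp only [Finset.mem_filter, mem_univ, true_and, not_lt] at hv
      omega
    have hall : ∀ S : Finset V, S.card ≤ (S.biUnion (fun u => univ.filter (fun v => 0 < M u v))).card := by
      intro S
      set T := S.biUnion (fun u => univ.filter (fun v => 0 < M u v)) with hT
      have key : (n+1) * S.card ≤ (n+1) * T.card := by
        calc (n+1) * S.card = ∑ _u ∈ S, (n+1) := by rw [Finset.sum_const, smul_eq_mul, mul_comm]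
        _ = ∑ u ∈ S, ∑ v, M u v := Finset.sum_congr rfl fun u _ => (hrow u).symm
        _ = ∑ u ∈ S, ∑ v ∈ T, M u v := by
              refine Finset.sum_congr rfl fun u hu => ?_
              refine (Finset.sum_subset (Finset.subset_univ _) ?_).symm
              intro v _ hv
              refine hM0 u v (fun hvin => hv ?_)
              rw [hT]
              exact Finset.mem_biUnion.mpr ⟨u, hu, hvin⟩
        _ = ∑ v ∈ T, ∑ u ∈ S, M u v := Finset.sum_comm
        _ ≤ ∑ v ∈ T, (n+1) := by
              refine Finset.sum_le_sum fun v _ => ?_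
              calc ∑ u ∈ S, M u v ≤ ∑ u, M u v :=
                    Finset.sum_le_sum_of_subset (Finset.subset_univ S)
              _ = n+1 := hcol v
        _ = (n+1) * T.card := by rw [Finset.sum_const, smul_eq_mul, mul_comm]
      exact Nat.le_of_mul_le_mul_left key (Nat.succ_pos n)
    obtain ⟨σ, hσinj, hσmem⟩ :=
      (Finset.all_card_le_biUnion_card_iff_exists_injective
        (fun u => univ.filter (fun v => 0 < M u v))).mp hall
    have hσpos : ∀ u, 0 < M u (σ u) := by
      intro u
      have := hσmem u
      simpa using this
    have hσbij : Function.Bijective σ := Finite.injective_iff_bijective.mp hσinj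
    set M' : V → V → ℕ := fun u v => M u v - (if σ u = v then 1 else 0) with hM'
    have hpt : ∀ u v, M' u v + (if σ u = v then 1 else 0) = M u v := by
      intro u v
      by_cases h : σ u = v
      · have h0 := hσpos u
        rw [h] at h0
        simp only [hM', h, if_pos]
        omega
      · simp [hM', h]
    have hrow' : ∀ u, ∑ v, M' u v = n := by
      intro u
      have h1 : ∑ v, (M' u v + (if σ u = v then 1 else 0)) = n + 1 := by
        rw [Finset.sum_congr rfl (fun v _ => hpt u v)]
        exact hrow u
      rw [Finset.sum_add_distrib] at h1
      have h2 : ∑ v, (if σ u = v then (1:ℕ) else 0) = 1 :=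
        Fintype.sum_ite_eq (σ u) (fun _ => (1:ℕ))
      omega
    have hcol' : ∀ v, ∑ u, M' u v = n := by
      intro v
      have h1 : ∑ u, (M' u v + (if σ u = v then 1 else 0)) = n + 1 := by
        rw [Finset.sum_congr rfl (fun u _ => hpt u v)]
        exact hcol v
      rw [Finset.sum_add_distrib] at h1
      obtain ⟨u₀, hu₀⟩ := hσbij.surjective v
      have h2 : ∑ u, (if σ u = v then (1:ℕ) else 0) = 1 := by
        have heqv : ∀ u, (if σ u = v then (1:ℕ) else 0) = (if u = u₀ then 1 else 0) := by
          intro u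
          by_cases h : u = u₀
          · rw [h]
            simp [hu₀]
          · have hne : σ u ≠ v := fun hc => h (hσinj (hc.trans hu₀.symm))
            simp [h, hne]
        rw [Finset.sum_congr rfl fun u _ => heqv u]
        exact Fintype.sum_ite_eq' u₀ (fun _ => 1)
      omega
    obtain ⟨f', hf'inj, hf'cov⟩ := ih M' hrow' hcol'
    refine ⟨fun c => if c = n then σ else f' c, ?_, ?_⟩
    · intro cc hcc
      by_cases h : cc = n
      · simpa [h] using hσinj
      · simpa [h] using hf'inj cc (by omega)
    · intro u v hMuv
      by_cases h : σ u = v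
      · exact ⟨n, Nat.lt_succ_self n, by simp [h]⟩
      · have hpos : 0 < M' u v := by
          have := hpt u v
          simp only [h, if_neg, if_false] at this
          omega
        obtain ⟨cc, hcc, hfc⟩ := hf'cov u v hpos
        have hccn : cc ≠ n := by omega
        exact ⟨cc, by omega, by simp [hccn, hfc]⟩


private lemma konigND (A : V → V → Prop) [DecidableRel A] :
    HasProperColoring A (maxDeg A) := by
  classical
  have hout : ∀ u, outDeg A u ≤ maxDeg A := fun u =>
    le_trans (Finset.le_sup (mem_univ u)) (le_max_left _ _)
  have hin : ∀ v, inDeg A v ≤ maxDeg A := fun v =>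
    le_trans (Finset.le_sup (mem_univ v)) (le_max_right _ _)
  set n := maxDeg A with hn
  have hdeg : ∀ u, outDeg A u = ∑ v, if A u v then 1 else 0 := fun u =>
    Finset.card_filter _ _
  have hdeg' : ∀ v, inDeg A v = ∑ u, if A u v then 1 else 0 := fun v =>
    Finset.card_filter _ _
  have houtsum : ∑ u, outDeg A u = ∑ v, inDeg A v := by
    rw [Finset.sum_congr rfl fun u _ => hdeg u, Finset.sum_congr rfl fun v _ => hdeg' v]
    exact Finset.sum_comm
  have hsum : (∑ v, (n - inDeg A v)) = ∑ u, (n - outDeg A u) := by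
    have h1 : ∑ u, (n - outDeg A u) + ∑ u, outDeg A u = ∑ _u : V, n := by
      rw [← Finset.sum_add_distrib]
      exact Finset.sum_congr rfl fun u _ => Nat.sub_add_cancel (hout u)
    have h2 : ∑ v, (n - inDeg A v) + ∑ v, inDeg A v = ∑ _v : V, n := by
      rw [← Finset.sum_add_distrib]
      exact Finset.sum_congr rfl fun v _ => Nat.sub_add_cancel (hin v)
    omega
  obtain ⟨E, hErow, hEcol⟩ := transportND (∑ u, (n - outDeg A u))
    (fun u => n - outDeg A u) (fun v => n - inDeg A v) rfl hsum
  set M : V → V → ℕ := fun u v => (if A u v then 1 else 0) + E u v with hM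
  have hrow : ∀ u, ∑ v, M u v = n := by
    intro u
    simp only [hM]
    rw [Finset.sum_add_distrib, hErow u, ← hdeg u]
    exact Nat.add_sub_cancel' (hout u)
  have hcol : ∀ v, ∑ u, M u v = n := by
    intro v
    simp only [hM]
    rw [Finset.sum_add_distrib, hEcol v, ← hdeg' v]
    exact Nat.add_sub_cancel' (hin v)
  obtain ⟨f, hfinj, hfcov⟩ := decomposeND n M hrow hcol
  have hpos : ∀ u v, A u v → 0 < M u v := by
    intro u v huv
    simp [hM, huv]
  refine ⟨fun u v => if h : ∃ cc, cc < n ∧ f cc u = v then h.choose else 0, ?_, ?_, ?_⟩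
  · intro u v huv
    have h := hfcov u v (hpos u v huv)
    simp only [dif_pos h]
    exact h.choose_spec.1
  · intro u v w huv huw hvw heq
    have h1 := hfcov u v (hpos u v huv)
    have h2 := hfcov u w (hpos u w huw)
    simp only [dif_pos h1, dif_pos h2] at heq
    apply hvw
    have e1 : f h1.choose u = v := h1.choose_spec.2
    have e2 : f h2.choose u = w := h2.choose_spec.2
    rw [← e1, ← e2, heq]
  · intro u v w huv hwv huw heq
    have h1 := hfcov u v (hpos u v huv)
    have h2 := hfcov w v (hpos w v hwv)
    simp only [dif_pos h1, dif_pos h2] at heq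
    apply huw
    have e1 : f h1.choose u = v := h1.choose_spec.2
    have e2 : f h2.choose w = v := h2.choose_spec.2
    refine hfinj h1.choose h1.choose_spec.1 ?_
    rw [e1, heq, e2]

private lemma constructND (A : V → V → Prop) [DecidableRel A] (n ℓ : ℕ)
    (γ₀ : V → V → ℕ) (hbase : ∀ u v, A u v → γ₀ u v < n) (hprop : ProperArc A γ₀)
    (c : V → ℕ) (hcne : ∀ u v, A u v → c u ≠ c v) (hclt : ∀ u, c u < 2 ^ ℓ) :
    HasNDColoring A (n + 2 * ℓ) := by
  classical
  have hex : ∀ {u v : V}, c u ≠ c v → ∃ i, (c u).testBit i ≠ (c v).testBit i := by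
    intro u v h
    by_contra hc
    push_neg at hc
    exact h (Nat.eq_of_testBit_eq fun i => hc i)
  set J : V → V → ℕ := fun u v =>
    if h : ∃ i, (c u).testBit i ≠ (c v).testBit i then Nat.find h else 0 with hJ
  have hJspec : ∀ {u v}, c u ≠ c v → (c u).testBit (J u v) ≠ (c v).testBit (J u v) := by
    intro u v h
    have hx := hex h
    simp only [hJ, dif_pos hx]
    exact Nat.find_spec hx
  have hJlt : ∀ {u v}, c u ≠ c v → J u v < ℓ := by
    intro u v h
    by_contra hge
    push_neg at hge
    have h1 : (c u).testBit (J u v) = false :=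
      Nat.testBit_eq_false_of_lt (lt_of_lt_of_le (hclt u) (Nat.pow_le_pow_right (by norm_num) hge))
    have h2 : (c v).testBit (J u v) = false :=
      Nat.testBit_eq_false_of_lt (lt_of_lt_of_le (hclt v) (Nat.pow_le_pow_right (by norm_num) hge))
    exact hJspec h (by rw [h1, h2])
  set SJ : ℕ → Finset (V × V) := fun j =>
    univ.filter (fun p => A p.1 p.2 ∧ J p.1 p.2 = j) with hSJ
  set good : Finset (V × V) → Prop := fun S =>
    ∀ p ∈ S, ∀ q ∈ S, (p.1 = q.1 ∨ p.2 = q.2) → p = q with hgood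
  have hfam : ∀ j : ℕ, ∃ T ∈ (SJ j).powerset.filter good,
      ∀ T' ∈ (SJ j).powerset.filter good, T'.card ≤ T.card := by
    intro j
    refine Finset.exists_max_image _ Finset.card ⟨∅, ?_⟩
    rw [Finset.mem_filter]
    refine ⟨Finset.empty_mem_powerset _, ?_⟩
    intro p hp
    exact absurd hp (Finset.notMem_empty p)
  choose F hFmem hFmax using hfam
  have hFsub : ∀ j, F j ⊆ SJ j := fun j =>
    Finset.mem_powerset.mp (Finset.mem_filter.mp (hFmem j)).1
  have hFgood : ∀ j, good (F j) := fun j => (Finset.mem_filter.mp (hFmem j)).2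
  have hFarc : ∀ {j : ℕ} {p : V × V}, p ∈ F j → A p.1 p.2 ∧ J p.1 p.2 = j := by
    intro j p hp
    have h := hFsub j hp
    rw [hSJ] at h
    simpa using h
  have hMax : ∀ j u v, (u, v) ∈ SJ j → (∃ z, (u, z) ∈ F j) ∨ (∃ w, (w, v) ∈ F j) := by
    intro j u v huv
    by_contra hcon
    push_neg at hcon
    obtain ⟨h1, h2⟩ := hcon
    have henotin : (u, v) ∉ F j := h1 v
    have hins : insert (u, v) (F j) ∈ (SJ j).powerset.filter good := by
      rw [Finset.mem_filter, Finset.mem_powerset]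
      constructor
      · exact Finset.insert_subset_iff.mpr ⟨huv, hFsub j⟩
      · rintro ⟨p1, p2⟩ hp ⟨q1, q2⟩ hq hshare
        change p1 = q1 ∨ p2 = q2 at hshare
        rcases Finset.mem_insert.mp hp with hp' | hp' <;>
          rcases Finset.mem_insert.mp hq with hq' | hq'
        · rw [hp', hq']
        · exfalso
          injection hp' with e1 e2
          rcases hshare with hsh | hsh
          · have hq1 : q1 = u := by rw [← hsh, e1]
            rw [hq1] at hq'
            exact h1 q2 hq'
          · have hq2 : q2 = v := by rw [← hsh, e2]
            rw [hq2] at hq'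
            exact h2 q1 hq'
        · exfalso
          injection hq' with e1 e2
          rcases hshare with hsh | hsh
          · have hp1 : p1 = u := by rw [hsh, e1]
            rw [hp1] at hp'
            exact h1 p2 hp'
          · have hp2 : p2 = v := by rw [hsh, e2]
            rw [hp2] at hp'
            exact h2 p1 hp'
        · exact hFgood j _ hp' _ hq' hshare
    have hcard := hFmax j _ hins
    rw [Finset.card_insert_of_notMem henotin] at hcard
    omega
  set bitc : V → ℕ → ℕ := fun u j => if (c u).testBit j then 1 else 0 with hbitc
  have hbit1 : ∀ u j, bitc u j ≤ 1 := by
    intro u j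
    simp only [hbitc]
    split <;> omega
  have hbitinj : ∀ (a b : V) (j j' : ℕ), bitc a j = bitc b j' →
      (c a).testBit j = (c b).testBit j' := by
    intro a b j j' h
    simp only [hbitc] at h
    cases h1 : (c a).testBit j <;> cases h2 : (c b).testBit j' <;> rw [h1, h2] at h <;>
      first
        | rfl
        | simp at h
  set γ : V → V → ℕ := fun u v =>
    if (u, v) ∈ F (J u v) then n + 2 * J u v + bitc u (J u v) else γ₀ u v with hγ
  have hact : ∀ {j : ℕ} {u z : V}, (u, z) ∈ F j → γ u z = n + 2 * j + bitc u j := by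
    intro j u z hz
    have hj : J u z = j := (hFarc hz).2
    simp only [hγ]
    rw [hj]
    rw [if_pos hz]
  have hcases : ∀ u v, A u v → (γ u v = γ₀ u v ∧ γ u v < n) ∨
      ((u, v) ∈ F (J u v) ∧ γ u v = n + 2 * J u v + bitc u (J u v)) := by
    intro u v huv
    by_cases h : (u, v) ∈ F (J u v)
    · right
      exact ⟨h, by simp only [hγ, if_pos h]⟩
    · left
      have he : γ u v = γ₀ u v := by simp only [hγ, if_neg h]
      exact ⟨he, he ▸ hbase u v huv⟩
  refine ⟨γ, ?_, ⟨?_, ?_⟩, ?_⟩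
  · -- bound
    intro u v huv
    rcases hcases u v huv with ⟨_, h⟩ | ⟨_, h⟩
    · omega
    · have hj : J u v < ℓ := hJlt (hcne u v huv)
      have hb := hbit1 u (J u v)
      omega
  · -- row proper
    intro u v w huv huw hvw heq
    rcases hcases u v huv with ⟨h1, hlt1⟩ | ⟨hm1, h1⟩ <;>
      rcases hcases u w huw with ⟨h2, hlt2⟩ | ⟨hm2, h2⟩
    · exact hprop.1 u v w huv huw hvw (by rw [← h1, ← h2, heq])
    · have hb := hbit1 u (J u w)
      omega
    · have hb := hbit1 u (J u v)
      omega
    · have hb1 := hbit1 u (J u v)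
      have hb2 := hbit1 u (J u w)
      have hJeq : J u v = J u w := by omega
      rw [hJeq] at hm1
      have := hFgood (J u w) _ hm1 _ hm2 (Or.inl rfl)
      injection this with e1 e2
      exact hvw e2
  · -- column proper
    intro u v w huv hwv huw heq
    rcases hcases u v huv with ⟨h1, hlt1⟩ | ⟨hm1, h1⟩ <;>
      rcases hcases w v hwv with ⟨h2, hlt2⟩ | ⟨hm2, h2⟩
    · exact hprop.2 u v w huv hwv huw (by rw [← h1, ← h2, heq])
    · have hb := hbit1 w (J w v)
      omega
    · have hb := hbit1 u (J u v)
      omega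
    · have hb1 := hbit1 u (J u v)
      have hb2 := hbit1 w (J w v)
      have hJeq : J u v = J w v := by omega
      rw [hJeq] at hm1
      have := hFgood (J w v) _ hm1 _ hm2 (Or.inr rfl)
      injection this with e1 e2
      exact huw e1
  · -- neighbour distinguishing
    intro u v huv
    have hne := hcne u v huv
    have hSJm : (u, v) ∈ SJ (J u v) := by
      rw [hSJ]
      simp [huv]
    rcases hMax (J u v) u v hSJm with ⟨z, hz⟩ | ⟨w, hw⟩
    · -- u has an out-signal
      have hxmem : (n + 2 * J u v + bitc u (J u v)) ∈ outColors A γ u :=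
        ⟨z, (hFarc hz).1, hact hz⟩
      have hxnot : (n + 2 * J u v + bitc u (J u v)) ∉ outColors A γ v := by
        rintro ⟨w', hvw', hval⟩
        rcases hcases v w' hvw' with ⟨_, hlt⟩ | ⟨hm, hveq⟩
        · omega
        · have hb1 := hbit1 v (J v w')
          have hb2 := hbit1 u (J u v)
          have hJeq : J v w' = J u v ∧ bitc v (J v w') = bitc u (J u v) := by
            constructor <;> omega
          have htb : (c v).testBit (J u v) = (c u).testBit (J u v) := by
            have := hbitinj v u (J v w') (J u v) hJeq.2
            rwa [hJeq.1] at this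
          exact hJspec hne htb.symm
      intro hDeq
      have hfst : outColors A γ u = outColors A γ v := congrArg Prod.fst hDeq
      rw [hfst] at hxmem
      exact hxnot hxmem
    · -- v has an in-signal
      have hwv : A w v := (hFarc hw).1
      have hJwv : J w v = J u v := (hFarc hw).2
      have hxmem : (n + 2 * J u v + bitc w (J u v)) ∈ inColors A γ v :=
        ⟨w, hwv, by rw [hact hw]⟩
      have hnewv : c w ≠ c v := hcne w v hwv
      have hb1 : (c w).testBit (J u v) ≠ (c v).testBit (J u v) := by
        have := hJspec hnewv
        rwa [hJwv] at this
      have hb2 : (c u).testBit (J u v) ≠ (c v).testBit (J u v) := hJspec hne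
      have hbwu : (c w).testBit (J u v) = (c u).testBit (J u v) := by
        cases h : (c v).testBit (J u v) <;> rw [h] at hb1 hb2 <;>
          simp only [ne_eq, Bool.not_eq_false, Bool.not_eq_true] at hb1 hb2 <;>
          rw [hb1, hb2]
      have hxnot : (n + 2 * J u v + bitc w (J u v)) ∉ inColors A γ u := by
        rintro ⟨p, hpu, hval⟩
        rcases hcases p u hpu with ⟨_, hlt⟩ | ⟨hm, hveq⟩
        · omega
        · have hc1 := hbit1 p (J p u)
          have hc2 := hbit1 w (J u v)
          have hJeq : J p u = J u v ∧ bitc p (J p u) = bitc w (J u v) := by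
            constructor <;> omega
          have htb : (c p).testBit (J u v) = (c w).testBit (J u v) := by
            have := hbitinj p w (J p u) (J u v) hJeq.2
            rwa [hJeq.1] at this
          have hspec := hJspec (hcne p u hpu)
          rw [hJeq.1] at hspec
          exact hspec (htb.trans hbwu)
      intro hDeq
      have hsnd : inColors A γ u = inColors A γ v := congrArg Prod.snd hDeq
      rw [← hsnd] at hxmem
      exact hxnot hxmem

end AuxND

/-- If the underlying graph of D has chromatic number k ≥ 3, then
ndi(D) ≤ Δ*(D) + 2⌈log₂ k⌉. -/
theorem stmt16 {V : Type*} [Fintype V] (A : V → V → Prop) [DecidableRel A]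
    (hirr : Irreflexive A) (G : SimpleGraph V)
    (hG : ∀ u v, G.Adj u v ↔ A u v ∨ A v u)
    (k : ℕ) (hk : 3 ≤ k) (hchrom : G.chromaticNumber = k) :
    HasNDColoring A (maxDeg A + 2 * Nat.clog 2 k) := by
  classical
  obtain ⟨γ₀, hb, hp⟩ := konigND A
  have hcol : G.Colorable k := by
    rw [← SimpleGraph.chromaticNumber_le_iff_colorable, hchrom]
  obtain ⟨C⟩ := hcol
  have hkpow : k ≤ 2 ^ Nat.clog 2 k := Nat.le_pow_clog (by norm_num) k
  refine constructND A (maxDeg A) (Nat.clog 2 k) γ₀ hb hp (fun v => (C v).val) ?_ ?_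
  · intro u v huv
    have hadj : G.Adj u v := (hG u v).mpr (Or.inl huv)
    have hCne := C.valid hadj
    exact fun h => hCne (Fin.val_injective h)
  · intro u
    exact lt_of_lt_of_le (C u).isLt hkpow
end
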